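/- Let c₁,c₂ be configurations of a level-2 collapsible pushdown system and ρ a run. (1) ρ witnesses (c₁,c₂) ∈ R_↓ if and only if ρ ∈ Runs(c₁,c₂) and ρ decomposes as ρ = λ₁∘ρ₁∘λ₂∘ρ₂∘⋯∘λ_n∘ρ_n where each λ_i is a high loop and each ρ_i is a run performing exactly one transition, which is a Pop₁ or a Collapse of level 1. (2) ρ witnesses (c₁,c₂) ∈ R_↑ if and only if ρ ∈ Runs(c₁,c₂) and ρ decomposes as ρ = λ₀∘ρ₁∘λ₁∘ρ₂∘⋯∘λ_{n−1}∘ρ_n∘λ_n where the λ_i are high loops and each ρ_i performs exactly one push operation. -/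

import Mathlib

namespace CPG

/-! ## Level-2 collapsible pushdown stacks -/

/-- Stack letters: `Sum.inl σ` is a letter with a level-1 link,
`Sum.inr (σ, k)` is a letter with a level-2 link to the substack of width `k`. -/
abbrev Letter (A : Type) := A ⊕ (A × ℕ)

def symOf {A : Type} : Letter A → A
  | Sum.inl a => a
  | Sum.inr (a, _) => a

def lvlOf {A : Type} : Letter A → ℕ
  | Sum.inl _ => 1
  | Sum.inr _ => 2

abbrev Word (A : Type) := List (Letter A)

/-- A 2-word: a list of words; the last word is the topmost one. -/
abbrev Stack2 (A : Type) := List (Word A)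

/-- The initial level-2 stack `⊥₂`. -/
def bottom2 {A : Type} (bot : A) : Stack2 A := [[Sum.inl bot]]

def top2 {A : Type} (s : Stack2 A) : Option (Word A) := s.getLast?

def top1 {A : Type} (s : Stack2 A) : Option (Letter A) := s.getLast?.bind List.getLast?

def symS {A : Type} (s : Stack2 A) : Option A := (top1 s).map symOf

def lvlS {A : Type} (s : Stack2 A) : Option ℕ := (top1 s).map lvlOf

def lnkS {A : Type} (s : Stack2 A) : Option ℕ :=
  match top1 s, top2 s with
  | some (Sum.inr (_, j)), _ => some j
  | some (Sum.inl _), some w => some (w.length - 1)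
  | _, _ => none

def clone2 {A : Type} (s : Stack2 A) : Option (Stack2 A) :=
  (top2 s).map fun w => s ++ [w]

def push1 {A : Type} [DecidableEq A] (bot a : A) (s : Stack2 A) : Option (Stack2 A) :=
  if a = bot then none else (top2 s).map fun w => s.dropLast ++ [w ++ [Sum.inl a]]

def push2 {A : Type} [DecidableEq A] (bot a : A) (s : Stack2 A) : Option (Stack2 A) :=
  if a = bot then none else
    (top2 s).map fun w => s.dropLast ++ [w ++ [Sum.inr (a, s.length - 1)]]

def pop2 {A : Type} (s : Stack2 A) : Option (Stack2 A) :=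
  if 1 < s.length then some s.dropLast else none

def pop1 {A : Type} (s : Stack2 A) : Option (Stack2 A) :=
  match s.getLast? with
  | some w => if 1 < w.length then some (s.dropLast ++ [w.dropLast]) else none
  | none => none

def collapse {A : Type} (s : Stack2 A) : Option (Stack2 A) :=
  match top1 s with
  | some (Sum.inr (_, k)) => if 0 < k then some (s.take k) else none
  | some (Sum.inl _) => pop1 s
  | none => none

/-- The level-2 stack operations. -/
inductive Op (A : Type) where
  | clone2 | pop1 | pop2 | collapse
  | push1 (a : A) | push2 (a : A)

def applyOp {A : Type} [DecidableEq A] (bot : A) : Op A → Stack2 A → Option (Stack2 A)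
  | .clone2 => clone2
  | .pop1 => pop1
  | .pop2 => pop2
  | .collapse => collapse
  | .push1 a => push1 bot a
  | .push2 a => push2 bot a

/-- `Stacks(Σ)` : the smallest set containing `⊥₂` and closed under the operations. -/
inductive IsStack {A : Type} [DecidableEq A] (bot : A) : Stack2 A → Prop where
  | base : IsStack bot (bottom2 bot)
  | step {s t : Stack2 A} (op : Op A) : IsStack bot s → applyOp bot op s = some t →
      IsStack bot t

/-- Iterated application of a partial stack operation. -/
def iter {A : Type} (f : Stack2 A → Option (Stack2 A)) : ℕ → Stack2 A → Option (Stack2 A)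
  | 0, s => some s
  | n + 1, s => (f s).bind (iter f n)

/-- `t` is a substack of `s`: `t = Pop₁ⁿ(Pop₂ᵐ(s))`. -/
def Substack {A : Type} (t s : Stack2 A) : Prop :=
  ∃ n m, (iter pop2 m s).bind (iter pop1 n) = some t

def ProperSubstack {A : Type} (t s : Stack2 A) : Prop := Substack t s ∧ t ≠ s

/-- `s` is a prefix of `t` (`s ⊑ t`). -/
def StackPrefix {A : Type} (s t : Stack2 A) : Prop :=
  s ≠ [] ∧ s.length ≤ t.length ∧ s.dropLast <+: t ∧
    ∀ j, s.length - 1 ≤ j → j < t.length → s.getLastD [] <+: t.getD j []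

/-- `t[s/u]` : the stack obtained from `t` by replacing the prefix `s` by `u`. -/
def substPrefix {A : Type} (t s u : Stack2 A) : Stack2 A :=
  u.dropLast ++
    (t.drop (s.length - 1)).map fun v => u.getLastD [] ++ v.drop (s.getLastD []).length

/-! ## Collapsible pushdown systems and runs -/

/-- A level-2 collapsible pushdown system. -/
structure CPS (Q A Γ : Type) where
  bot : A
  q0 : Q
  Δ : Set (Q × A × Γ × Q × Op A)

variable {Q A Γ : Type} [DecidableEq A]

/-- A `γ`-labelled transition realized by the operation `op`. -/
def TransOp (S : CPS Q A Γ) (γ : Γ) (op : Op A) (c c' : Q × Stack2 A) : Prop :=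
  ∃ σ : A, symS c.2 = some σ ∧ (c.1, σ, γ, c'.1, op) ∈ S.Δ ∧
    applyOp S.bot op c.2 = some c'.2

def Trans (S : CPS Q A Γ) (γ : Γ) (c c' : Q × Stack2 A) : Prop :=
  ∃ op, TransOp S γ op c c'

/-- A run of a collapsible pushdown system (recording configurations, labels and
operations of each step). -/
structure Run (S : CPS Q A Γ) where
  len : ℕ
  cfg : ℕ → Q × Stack2 A
  lab : ℕ → Γ
  op : ℕ → Op A
  ok : ∀ i, i < len → TransOp S (lab i) (op i) (cfg i) (cfg (i + 1))

def Run.stk {S : CPS Q A Γ} (ρ : Run S) (i : ℕ) : Stack2 A := (ρ.cfg i).2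

/-- The word of labels along a run. -/
def Run.labels {S : CPS Q A Γ} (ρ : Run S) : List Γ :=
  List.ofFn fun i : Fin ρ.len => ρ.lab i

/-- `Reach_L`-reachability: a run from `c` to `c'` labelled by a word in `L`. -/
def ReachL (S : CPS Q A Γ) (L : Language Γ) (c c' : Q × Stack2 A) : Prop :=
  ∃ ρ : Run S, ρ.cfg 0 = c ∧ ρ.cfg ρ.len = c' ∧ ρ.labels ∈ L

/-- Plain reachability. -/
def Reach (S : CPS Q A Γ) (c c' : Q × Stack2 A) : Prop :=
  ∃ ρ : Run S, ρ.cfg 0 = c ∧ ρ.cfg ρ.len = c'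

/-! ## ε-contraction -/

def oneLetterLang (γ : Γ) : Language Γ := {[γ]}

def nonEpsLang (eps : Γ) : Language Γ := {w | ∃ γ : Γ, γ ≠ eps ∧ w = [γ]}

/-- The language `{ε}*`. -/
def epsStar (eps : Γ) : Language Γ := KStar.kstar (oneLetterLang eps)

/-- The language `({ε}*(Γ∖{ε}))*`. -/
def domLang (eps : Γ) : Language Γ :=
  KStar.kstar (epsStar eps * nonEpsLang eps)

/-- The language `{ε}*γ`. -/
def edgeLang (eps γ : Γ) : Language Γ := epsStar eps * oneLetterLang γ

/-- The vertex set of the ε-contraction `G/ε`. -/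
def EpsDomain (S : CPS Q A Γ) (eps : Γ) : Set (Q × Stack2 A) :=
  {c | ReachL S (domLang eps) (S.q0, bottom2 S.bot) c}

/-! ## (Generalised) milestones and the order ≪ -/

/-- `wordAt bot s i` is the word `wᵢ` of `s`, with the convention `w₀ = ⊥`. -/
def wordAt {A : Type} (bot : A) (s : Stack2 A) (i : ℕ) : Word A :=
  if i = 0 then [Sum.inl bot] else s.getD (i - 1) []

/-- Longest common prefix of two words. -/
def lcp {α : Type} [DecidableEq α] : List α → List α → List α
  | a :: s, b :: t => if a = b then a :: lcp s t else []
  | _, _ => []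

/-- `m` is a generalised milestone of `s`. -/
def GenMilestone (bot : A) (s m : Stack2 A) : Prop :=
  ∃ i v, i < s.length ∧ m = s.take i ++ [v] ∧
    lcp (wordAt bot s i) (wordAt bot s (i + 1)) <+: v ∧
    (v <+: wordAt bot s i ∨ v <+: wordAt bot s (i + 1))

/-- `m` is a milestone of `s`. -/
def Milestone (bot : A) (s m : Stack2 A) : Prop :=
  ∃ i v, i < s.length ∧ m = s.take i ++ [v] ∧
    lcp (wordAt bot s i) (wordAt bot s (i + 1)) <+: v ∧
    v <+: wordAt bot s (i + 1)

def genMilestones (bot : A) (s : Stack2 A) : Set (Stack2 A) := {m | GenMilestone bot s m}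

def milestones (bot : A) (s : Stack2 A) : Set (Stack2 A) := {m | Milestone bot s m}

/-- The base cases of the partial order `≪`. -/
def llBase (bot : A) (s t : Stack2 A) : Prop :=
  s.length < t.length ∨
    (s ≠ [] ∧ s.length = t.length ∧ s.dropLast = t.dropLast ∧
      ((t.getLastD [] <+: s.getLastD [] ∧ t.getLastD [] ≠ s.getLastD [] ∧
          s.getLastD [] <+: wordAt bot s (s.length - 1)) ∨
        (s.getLastD [] <+: t.getLastD [] ∧ s.getLastD [] ≠ t.getLastD [] ∧
          ¬ t.getLastD [] <+: wordAt bot s (s.length - 1))))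

/-- The order `≪`: the smallest reflexive transitive relation containing `llBase`. -/
def ll (bot : A) : Stack2 A → Stack2 A → Prop := Relation.ReflTransGen (llBase bot)

/-- `m'` is the ≪-successor of `m` within `genMilestones bot s`. -/
def LlSuccessor (bot : A) (s m m' : Stack2 A) : Prop :=
  GenMilestone bot s m ∧ GenMilestone bot s m' ∧ m ≠ m' ∧ ll bot m m' ∧
    ∀ m'', GenMilestone bot s m'' → ll bot m m'' → m'' ≠ m → ll bot m' m''

/-! ## Loops, returns and 1-loops -/

/-- The segment `[i,j]` of `ρ` is a loop (of its initial stack). -/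
def LoopSeg {S : CPS Q A Γ} (ρ : Run S) (i j : ℕ) : Prop :=
  i ≤ j ∧ j ≤ ρ.len ∧ ρ.stk j = ρ.stk i ∧
    (∀ k, i ≤ k → k ≤ j → ∀ t, pop2 (ρ.stk i) = some t → ¬ Substack (ρ.stk k) t) ∧
    (∀ k, i ≤ k → k ≤ j → ∀ m, 0 < m → ∀ t, iter pop1 m (ρ.stk i) = some t →
      ρ.stk k = t → ∀ m', m' < m → ∃ t', iter pop1 m' (ρ.stk i) = some t' ∧
        lvlS t' = some 1)

/-- A high loop: a loop that never visits `Pop₁` of its stack. -/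
def HighLoopSeg {S : CPS Q A Γ} (ρ : Run S) (i j : ℕ) : Prop :=
  LoopSeg ρ i j ∧ ∀ k, i ≤ k → k ≤ j → ∀ t, pop1 (ρ.stk i) = some t → ρ.stk k ≠ t

/-- A low loop: a loop whose second and second-to-last stacks are `Pop₁` of its stack. -/
def LowLoopSeg {S : CPS Q A Γ} (ρ : Run S) (i j : ℕ) : Prop :=
  LoopSeg ρ i j ∧ i < j ∧
    ∃ t, pop1 (ρ.stk i) = some t ∧ ρ.stk (i + 1) = t ∧ ρ.stk (j - 1) = t

/-- The common part of the definition of a return on the segment `[i,j]`: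
it leads from its initial stack `t` to `Pop₂(t)` and never visits a substack
of `Pop₂(t)` before its final configuration. -/
def RetShell {S : CPS Q A Γ} (ρ : Run S) (i j : ℕ) : Prop :=
  i < j ∧ j ≤ ρ.len ∧ pop2 (ρ.stk i) = some (ρ.stk j) ∧
    ∀ k, i ≤ k → k < j → ¬ Substack (ρ.stk k) (ρ.stk j)

/-- The segment `[i,j]` of `ρ` is a return (from its initial stack `t` to `Pop₂(t)`). -/
inductive RetSeg {S : CPS Q A Γ} (ρ : Run S) : ℕ → ℕ → Prop where
  | pop2 {i j : ℕ} (h : RetShell ρ i j) (hop : ρ.op (j - 1) = Op.pop2) : RetSeg ρ i j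
  | collapse {i j : ℕ} (h : RetShell ρ i j) (hop : ρ.op (j - 1) = Op.collapse)
      (hpre : ∃ w w', top2 (ρ.stk i) = some w ∧ top2 (ρ.stk (j - 1)) = some w' ∧
        w <+: w' ∧ w ≠ w') : RetSeg ρ i j
  | sub {i k j : ℕ} (h : RetShell ρ i j) (hik : i < k) (hkj : k ≤ j)
      (hpop : pop1 (ρ.stk i) = some (ρ.stk k)) (hret : RetSeg ρ k j) : RetSeg ρ i j

/-- The segment `[i,j]` of `ρ` is a level-1-loop. -/
def OneLoopSeg {S : CPS Q A Γ} (ρ : Run S) (i j : ℕ) : Prop :=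
  i ≤ j ∧ j ≤ ρ.len ∧
    ∃ (s : Stack2 A) (w : Word A) (s' : Stack2 A),
      ρ.stk i = s ++ [w] ∧ ρ.stk j = s ++ s' ++ [w] ∧
      (∀ k, i ≤ k → k ≤ j → s.length < (ρ.stk k).length) ∧
      (∀ k, i ≤ k → k ≤ j → 1 < w.length → top2 (ρ.stk k) = some w.dropLast →
        ∃ m, k < m ∧ m ≤ j ∧ RetSeg ρ k m)

/-! ## ExRet, ExLoop, ... -/

/-- `w↓₀` : replace every level-2 link by `0`. -/
def down0 {A : Type} : Word A → Word A :=
  List.map fun a => match a with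
    | Sum.inl x => Sum.inl x
    | Sum.inr (x, _) => Sum.inr (x, 0)

def ExRet (S : CPS Q A Γ) (w : Word A) : Set (Q × Q) :=
  {p | ∃ ρ : Run S, ρ.cfg 0 = (p.1, [down0 w, down0 w]) ∧
    ρ.cfg ρ.len = (p.2, [down0 w]) ∧ RetSeg ρ 0 ρ.len}

def ExLoop (S : CPS Q A Γ) (w : Word A) : Set (Q × Q) :=
  {p | ∃ ρ : Run S, ρ.cfg 0 = (p.1, [down0 w]) ∧ ρ.cfg ρ.len = (p.2, [down0 w]) ∧
    LoopSeg ρ 0 ρ.len}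

def ExHLoop (S : CPS Q A Γ) (w : Word A) : Set (Q × Q) :=
  {p | ∃ ρ : Run S, ρ.cfg 0 = (p.1, [down0 w]) ∧ ρ.cfg ρ.len = (p.2, [down0 w]) ∧
    HighLoopSeg ρ 0 ρ.len}

def ExLLoop (S : CPS Q A Γ) (w : Word A) : Set (Q × Q) :=
  {p | ∃ ρ : Run S, ρ.cfg 0 = (p.1, [down0 w]) ∧ ρ.cfg ρ.len = (p.2, [down0 w]) ∧
    LowLoopSeg ρ 0 ρ.len}

def ExOneLoop (S : CPS Q A Γ) (w : Word A) : Set (Q × Q) :=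
  {p | ∃ (ρ : Run S) (s' : Stack2 A), ρ.cfg 0 = (p.1, [down0 w]) ∧
    ρ.cfg ρ.len = (p.2, s' ++ [down0 w]) ∧ OneLoopSeg ρ 0 ρ.len}

/-! ## Finite binary trees -/

/-- Finite binary trees with labels in `α` and optional left/right children. -/
inductive PTree (α : Type) where
  | node (a : α) (l r : Option (PTree α)) : PTree α

/-- The label of the node at address `d` (`false` = left/0, `true` = right/1). -/
def PTree.labelAt {α : Type} : PTree α → List Bool → Option α
  | .node a _ _, [] => some a
  | .node _ (some t) _, false :: d => t.labelAt d
  | .node _ none _, false :: _ => none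
  | .node _ _ (some t), true :: d => t.labelAt d
  | .node _ _ none, true :: _ => none

def PTree.map {α β : Type} (f : α → β) : PTree α → PTree β
  | .node a l r =>
    .node (f a)
      (match l with | none => none | some t => some (t.map f))
      (match r with | none => none | some t => some (t.map f))

/-- Convolution of two trees, with `none` as padding symbol `□`. -/
def PTree.conv {α β : Type} : PTree α → PTree β → PTree (Option α × Option β)
  | .node a l r, .node b l' r' =>
    .node (some a, some b)
      (match l, l' with
        | none, none => none
        | some t, none => some (t.map fun x => (some x, none))
        | none, some u => some (u.map fun x => (none, some x))
        | some t, some u => some (PTree.conv t u))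
      (match r, r' with
        | none, none => none
        | some t, none => some (t.map fun x => (some x, none))
        | none, some u => some (u.map fun x => (none, some x))
        | some t, some u => some (PTree.conv t u))

/-- A (bottom-up nondeterministic) finite tree automaton. -/
structure TreeAut (α : Type) where
  St : Type
  fin : Finite St
  qI : St
  F : Set St
  Δ : Set (St × α × St × St)

/-- Acceptance of a finite tree by a tree automaton. -/
def TreeAut.Accepts {α : Type} (M : TreeAut α) (t : PTree α) : Prop :=
  ∃ ρ : List Bool → M.St,
    (∀ d, t.labelAt d = none → ρ d = M.qI) ∧
    (∀ d a, t.labelAt d = some a → (ρ d, a, ρ (d ++ [false]), ρ (d ++ [true])) ∈ M.Δ) ∧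
    ρ [] ∈ M.F

/-- A family of binary relations on `B` is tree-automatic. -/
def IsTreeAutomatic {B : Type} {I : Type} (E : I → B → B → Prop) : Prop :=
  ∃ (α : Type) (_ : Finite α) (AB : TreeAut α) (AE : I → TreeAut (Option α × Option α))
    (f : {t : PTree α // AB.Accepts t} → B),
    Function.Bijective f ∧
      ∀ (i : I) (t₁ t₂ : {t : PTree α // AB.Accepts t}),
        (AE i).Accepts (PTree.conv t₁.1 t₂.1) ↔ E i (f t₁) (f t₂)

/-! ## The encoding of configurations as trees -/

/-- Labels of encoding trees: a state, a pair (symbol, link level), or `ε`. -/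
abbrev EncLabel (Q A : Type) := Q ⊕ ((A × ℕ) ⊕ Unit)

def epsLab {Q A : Type} : EncLabel Q A := Sum.inr (Sum.inr ())

def symLab {Q A : Type} (τ : Letter A) : EncLabel Q A := Sum.inr (Sum.inl (symOf τ, lvlOf τ))

/-- Encoding of blocklines as trees (with a fuel parameter driving the recursion;
the fuel used in `encStack` is large enough so that it never runs out on actual
blocklines). The left subtree encodes the blockline induced by the first maximal
block, the right subtree the remaining blocks. -/
def encBL (Q : Type) {A : Type} [DecidableEq A] :
    ℕ → EncLabel Q A → List (Word A) → PTree (EncLabel Q A)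
  | 0, σ, _ => .node σ none none
  | _ + 1, σ, [] => .node σ none none
  | fuel + 1, σ, w :: rest =>
    if w.length ≤ 1 then
      match rest with
      | [] => .node σ none none
      | _ :: _ => .node σ none (some (encBL Q fuel epsLab rest))
    else
      let p : Word A → Bool := fun v => decide (v.take 2 = w.take 2)
      let blk := (w :: rest).takeWhile p
      let restBlk := (w :: rest).dropWhile p
      .node σ
        (some (encBL Q fuel
          (match w[1]? with | some τ' => symLab τ' | none => epsLab)
          (blk.map List.tail)))
        (match restBlk with
          | [] => none
          | _ :: _ => some (encBL Q fuel epsLab restBlk))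

/-- The total number of letters of a 2-word. -/
def size2 {A : Type} (s : Stack2 A) : ℕ := (s.map List.length).sum

/-- The encoding `Enc(s) = Enc(s, (⊥,1))` of a stack. -/
def encStack (Q : Type) {A : Type} [DecidableEq A] (bot : A) (s : Stack2 A) :
    PTree (EncLabel Q A) :=
  encBL Q (size2 s + 1) (Sum.inr (Sum.inl (bot, 1))) s

/-- The encoding of a configuration: the state at the root, `Enc(s)` as left subtree. -/
def Enc {Q A : Type} [DecidableEq A] (bot : A) (c : Q × Stack2 A) : PTree (EncLabel Q A) :=
  .node (Sum.inl c.1) (some (encStack Q bot c.2)) none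

/-- The class `EncTrees` of encoding trees. -/
def EncTrees (Q A : Type) (bot : A) : Set (PTree (EncLabel Q A)) :=
  {T | (∃ q : Q, T.labelAt [] = some (Sum.inl q)) ∧
    T.labelAt [true] = none ∧ T.labelAt [false] ≠ none ∧
    T.labelAt [false] = some (Sum.inr (Sum.inl (bot, 1))) ∧
    (∀ (d : List Bool) (x : EncLabel Q A),
      T.labelAt (false :: (d ++ [false])) = some x →
        ∃ (σ : A) (l : ℕ), σ ≠ bot ∧ (l = 1 ∨ l = 2) ∧ x = Sum.inr (Sum.inl (σ, l))) ∧
    (∀ (d : List Bool) (x : EncLabel Q A), T.labelAt (d ++ [true]) = some x → x = epsLab) ∧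
    (∀ (d : List Bool) (σ : A), ¬ (T.labelAt (d ++ [false]) = some (Sum.inr (Sum.inl (σ, 1))) ∧
      T.labelAt (d ++ [true, false]) = some (Sum.inr (Sum.inl (σ, 1)))))}

/-- Restriction of a tree to the nodes lexicographically ≤ `d`. -/
def restrictLex {α : Type} : PTree α → List Bool → PTree α
  | .node a _ _, [] => .node a none none
  | .node a l _, false :: d =>
      .node a (match l with | none => none | some t => some (restrictLex t d)) none
  | .node a l r, true :: d =>
      .node a l (match r with | none => none | some t => some (restrictLex t d))

/-- The lexicographic order on tree addresses. -/
def lexLe (d e : List Bool) : Prop :=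
  d <+: e ∨ ∃ (c x y : List Bool), d = c ++ false :: x ∧ e = c ++ true :: y

/-! ## Deterministic finite automata with output (Moore machines) -/

structure Moore (α ω : Type) where
  St : Type
  fin : Finite St
  init : St
  step : St → α → St
  out : St → ω

def Moore.output {α ω : Type} (M : Moore α ω) (w : List α) : ω :=
  M.out (w.foldl M.step M.init)

/-- A decomposition `ρ = λ₁∘ρ₁∘⋯∘λ_n∘ρ_n` with `λ_i` high loops and `ρ_i` single
transitions performing `Pop₁` or a collapse of level 1. -/
def DownDecomp {Q A Γ : Type} [DecidableEq A] {S : CPS Q A Γ} (ρ : Run S) : Prop :=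
  ∃ (n : ℕ) (idx : ℕ → ℕ), idx 0 = 0 ∧ idx (2 * n) = ρ.len ∧
    (∀ i, i < 2 * n → idx i ≤ idx (i + 1)) ∧
    ∀ i, i < n →
      HighLoopSeg ρ (idx (2 * i)) (idx (2 * i + 1)) ∧
      idx (2 * i + 2) = idx (2 * i + 1) + 1 ∧
      (ρ.op (idx (2 * i + 1)) = Op.pop1 ∨
        (ρ.op (idx (2 * i + 1)) = Op.collapse ∧ lvlS (ρ.stk (idx (2 * i + 1))) = some 1))

/-- A decomposition `ρ = λ₀∘ρ₁∘λ₁∘⋯∘ρ_n∘λ_n` with `λ_i` high loops and `ρ_i` single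
transitions performing a push operation. -/
def UpDecomp {Q A Γ : Type} [DecidableEq A] {S : CPS Q A Γ} (ρ : Run S) : Prop :=
  ∃ (n : ℕ) (idx : ℕ → ℕ), idx 0 = 0 ∧ idx (2 * n + 1) = ρ.len ∧
    (∀ i, i < 2 * n + 1 → idx i ≤ idx (i + 1)) ∧
    (∀ i, i ≤ n → HighLoopSeg ρ (idx (2 * i)) (idx (2 * i + 1))) ∧
    (∀ i, i < n → idx (2 * i + 2) = idx (2 * i + 1) + 1 ∧
      ∃ a : A, ρ.op (idx (2 * i + 1)) = Op.push1 a ∨ ρ.op (idx (2 * i + 1)) = Op.push2 a)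

/-! ### Auxiliary machinery for Statement 13 -/

section Statement13Aux

set_option linter.unusedSectionVars false

variable {Q A Γ : Type} [DecidableEq A] {S : CPS Q A Γ}

lemma getLast?_decomp {β : Type} {l : List β} {x : β} (h : l.getLast? = some x) :
    l = l.dropLast ++ [x] := by
  have hne : l ≠ [] := by rintro rfl; simp at h
  have h1 : l.getLast? = some (l.getLast hne) := List.getLast?_eq_getLast hne
  rw [h1] at h
  obtain rfl : l.getLast hne = x := Option.some.inj h
  exact (List.dropLast_append_getLast hne).symm

lemma getLastD_of_getLast? {β : Type} {l : List β} {x b : β} (h : l.getLast? = some x) :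
    l.getLastD b = x := by
  rw [List.getLastD_eq_getLast?, h]; rfl

lemma stack_decomp {s : Stack2 A} (h : s ≠ []) : s = s.dropLast ++ [s.getLastD []] := by
  have h1 : s.getLast? = some (s.getLast h) := List.getLast?_eq_getLast h
  rw [getLastD_of_getLast? h1]
  exact (List.dropLast_append_getLast h).symm

lemma getLast?_of_ne_nil {s : Stack2 A} (h : s ≠ []) : s.getLast? = some (s.getLastD []) := by
  have h1 : s.getLast? = some (s.getLast h) := List.getLast?_eq_getLast h
  rw [h1, getLastD_of_getLast? h1]

/-- Spec for `pop1`. -/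
lemma pop1_eq_some {s t : Stack2 A} (h : pop1 s = some t) :
    ∃ w, s.getLast? = some w ∧ 1 < w.length ∧ t = s.dropLast ++ [w.dropLast] := by
  unfold pop1 at h
  rcases hg : s.getLast? with _ | w <;> rw [hg] at h <;> dsimp only at h
  · simp at h
  · split at h
    · exact ⟨w, rfl, by assumption, (Option.some.inj h).symm⟩
    · simp at h

lemma pop1_concat {D : Stack2 A} {w : Word A} (hw : 1 < w.length) :
    pop1 (D ++ [w]) = some (D ++ [w.dropLast]) := by
  unfold pop1
  rw [List.getLast?_concat]
  dsimp only
  rw [if_pos hw, List.dropLast_concat]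

lemma pop2_eq_some {s t : Stack2 A} (h : pop2 s = some t) :
    1 < s.length ∧ t = s.dropLast := by
  unfold pop2 at h
  split at h
  · exact ⟨by assumption, (Option.some.inj h).symm⟩
  · simp at h

lemma pop2_def {s : Stack2 A} (h : 1 < s.length) : pop2 s = some s.dropLast := by
  unfold pop2; rw [if_pos h]

lemma clone2_eq_some {s t : Stack2 A} (h : clone2 s = some t) :
    ∃ w, s.getLast? = some w ∧ t = s ++ [w] := by
  unfold clone2 top2 at h
  rcases hg : s.getLast? with _ | w <;> rw [hg] at h
  · simp at h
  · simp only [Option.map_some] at h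
    exact ⟨w, rfl, (Option.some.inj h).symm⟩

lemma push1_eq_some {bot a : A} {s t : Stack2 A} (h : push1 bot a s = some t) :
    ∃ w, s.getLast? = some w ∧ t = s.dropLast ++ [w ++ [Sum.inl a]] := by
  unfold push1 top2 at h
  split at h
  · simp at h
  · rcases hg : s.getLast? with _ | w
    · rw [hg] at h; simp at h
    · rw [hg] at h
      exact ⟨w, rfl, (Option.some.inj h).symm⟩

lemma push2_eq_some {bot a : A} {s t : Stack2 A} (h : push2 bot a s = some t) :
    ∃ w, s.getLast? = some w ∧ t = s.dropLast ++ [w ++ [Sum.inr (a, s.length - 1)]] := by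
  unfold push2 top2 at h
  split at h
  · simp at h
  · rcases hg : s.getLast? with _ | w
    · rw [hg] at h; simp at h
    · rw [hg] at h
      exact ⟨w, rfl, (Option.some.inj h).symm⟩

lemma collapse_eq_some {s t : Stack2 A} (h : collapse s = some t) :
    (∃ σ : A, top1 s = some (Sum.inl σ) ∧ pop1 s = some t) ∨
    (∃ (σ : A) (κ : ℕ), top1 s = some (Sum.inr (σ, κ)) ∧ 0 < κ ∧ t = s.take κ) := by
  unfold collapse at h
  rcases hg : top1 s with _ | (σ | ⟨σ, κ⟩) <;> rw [hg] at h <;> dsimp only at h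
  · simp at h
  · exact Or.inl ⟨σ, rfl, h⟩
  · right
    split at h
    · exact ⟨σ, κ, rfl, by assumption, (Option.some.inj h).symm⟩
    · simp at h

lemma applyOp_ne_nil {bot : A} {op : Op A} {s t : Stack2 A}
    (h : applyOp bot op s = some t) : t ≠ [] := by
  cases op with
  | clone2 =>
      obtain ⟨w, _, rfl⟩ := clone2_eq_some h; simp
  | pop1 =>
      obtain ⟨w, _, _, rfl⟩ := pop1_eq_some h; simp
  | pop2 =>
      obtain ⟨h1, rfl⟩ := pop2_eq_some h
      have : s.dropLast.length = s.length - 1 := s.length_dropLast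
      intro hn
      rw [hn] at this
      simp at this
      omega
  | collapse =>
      rcases collapse_eq_some h with ⟨σ, _, hp⟩ | ⟨σ, κ, htop, hκ, rfl⟩
      · obtain ⟨w, _, _, rfl⟩ := pop1_eq_some hp; simp
      · have hs : s ≠ [] := by
          rintro rfl; unfold top1 at htop; simp at htop
        intro hn
        have hmin : min κ s.length = 0 := by
          rw [← List.length_take (i := κ) (l := s), hn]; rfl
        rcases Nat.min_eq_zero_iff.mp hmin with h' | h'
        · omega
        · exact hs (List.eq_nil_of_length_eq_zero h')
  | push1 a =>
      obtain ⟨w, _, rfl⟩ := push1_eq_some h; simp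
  | push2 a =>
      obtain ⟨w, _, rfl⟩ := push2_eq_some h; simp

/-! #### Iteration lemmas -/

lemma iter_zero (f : Stack2 A → Option (Stack2 A)) (s : Stack2 A) : iter f 0 s = some s := rfl

lemma iter_succ (f : Stack2 A → Option (Stack2 A)) (n : ℕ) (s : Stack2 A) :
    iter f (n + 1) s = (f s).bind (iter f n) := rfl

lemma iter_one (f : Stack2 A → Option (Stack2 A)) (s : Stack2 A) : iter f 1 s = f s := by
  rw [iter_succ]
  cases f s <;> rfl

lemma iter_add (f : Stack2 A → Option (Stack2 A)) (a b : ℕ) :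
    ∀ s, iter f (a + b) s = (iter f a s).bind (iter f b) := by
  induction a with
  | zero => intro s; simp [iter]
  | succ a ih =>
      intro s
      rw [show a + 1 + b = (a + b) + 1 by omega, iter_succ, iter_succ]
      cases f s with
      | none => rfl
      | some r => simpa using ih r

lemma iter_succ' (f : Stack2 A → Option (Stack2 A)) (n : ℕ) (s : Stack2 A) :
    iter f (n + 1) s = (iter f n s).bind f := by
  rw [iter_add f n 1 s]
  cases iter f n s with
  | none => rfl
  | some r => simpa using iter_one f r

lemma dropLast_prefix' {β : Type} (l : List β) : l.dropLast <+: l := by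
  rw [List.dropLast_eq_take]
  exact List.take_prefix _ _

lemma pop1_spec {s t : Stack2 A} (h : pop1 s = some t) :
    t.dropLast = s.dropLast ∧ t.getLastD [] = (s.getLastD []).dropLast ∧ s ≠ [] ∧
      1 < (s.getLastD []).length := by
  obtain ⟨w, hg, hw, rfl⟩ := pop1_eq_some h
  have hne : s ≠ [] := by rintro rfl; simp at hg
  have hD : s.getLastD [] = w := getLastD_of_getLast? hg
  refine ⟨List.dropLast_concat, ?_, hne, by rw [hD]; exact hw⟩
  rw [List.getLastD_concat, hD]

lemma iter_pop1_spec : ∀ {m : ℕ} {s t : Stack2 A}, iter pop1 m s = some t →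
    t.dropLast = s.dropLast ∧ t.getLastD [] <+: s.getLastD [] ∧
      (t.getLastD []).length + m = (s.getLastD []).length := by
  intro m
  induction m with
  | zero =>
      intro s t h
      obtain rfl : s = t := Option.some.inj h
      exact ⟨rfl, List.prefix_refl _, rfl⟩
  | succ m ih =>
      intro s t h
      rw [iter_succ] at h
      obtain ⟨r, h1, h2⟩ := Option.bind_eq_some_iff.mp h
      obtain ⟨hd1, hl1, hne, hlen1⟩ := pop1_spec h1
      obtain ⟨hd2, hl2, hlen2⟩ := ih h2
      refine ⟨hd2.trans hd1, ?_, ?_⟩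
      · rw [hl1] at hl2
        exact hl2.trans (dropLast_prefix' _)
      · rw [hl1, List.length_dropLast] at hlen2
        omega
lemma iter_pop1_length : ∀ {m : ℕ} {s t : Stack2 A}, iter pop1 m s = some t →
    t.length = s.length := by
  intro m
  induction m with
  | zero => intro s t h; obtain rfl : s = t := Option.some.inj h; rfl
  | succ m ih =>
      intro s t h
      rw [iter_succ] at h
      obtain ⟨r, h1, h2⟩ := Option.bind_eq_some_iff.mp h
      obtain ⟨w, hg, hw, rfl⟩ := pop1_eq_some h1
      have hne : s ≠ [] := by rintro rfl; simp at hg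
      have : (s.dropLast ++ [w.dropLast]).length = s.length := by
        have h3 : s.dropLast.length = s.length - 1 := s.length_dropLast
        have h4 : 0 < s.length := List.length_pos_iff.mpr hne
        simp [h3]
        omega
      rw [ih h2, this]

lemma iter_pop2_take : ∀ (m : ℕ) {s : Stack2 A}, m < s.length →
    iter pop2 m s = some (s.take (s.length - m)) := by
  intro m
  induction m with
  | zero =>
      intro s _
      rw [iter_zero, Nat.sub_zero, List.take_length]
  | succ m ih =>
      intro s hm
      have h1 : 1 < s.length := by omega
      rw [iter_succ, pop2_def h1]
      have h2 : m < s.dropLast.length := by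
        rw [s.length_dropLast]; omega
      rw [Option.bind_some, ih h2]
      congr 1
      rw [s.length_dropLast, List.dropLast_eq_take, List.take_take]
      congr 1
      omega

lemma iter_pop2_length : ∀ {m : ℕ} {s t : Stack2 A}, iter pop2 m s = some t →
    t.length ≤ s.length := by
  intro m
  induction m with
  | zero => intro s t h; obtain rfl : s = t := Option.some.inj h; exact le_refl _
  | succ m ih =>
      intro s t h
      rw [iter_succ] at h
      obtain ⟨r, h1, h2⟩ := Option.bind_eq_some_iff.mp h
      obtain ⟨_, rfl⟩ := pop2_eq_some h1
      have := ih h2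
      have h3 := s.length_dropLast
      omega

/-! #### Substack lemmas -/

lemma substack_mk {n m : ℕ} {s y t : Stack2 A} (h2 : iter pop2 m s = some y)
    (h1 : iter pop1 n y = some t) : Substack t s :=
  ⟨n, m, by rw [h2, Option.bind_some]; exact h1⟩

lemma substack_elim {t s : Stack2 A} (h : Substack t s) :
    ∃ m y n, iter pop2 m s = some y ∧ iter pop1 n y = some t := by
  obtain ⟨n, m, h⟩ := h
  obtain ⟨y, h2, h1⟩ := Option.bind_eq_some_iff.mp h
  exact ⟨m, y, n, h2, h1⟩

lemma substack_refl (s : Stack2 A) : Substack s s :=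
  substack_mk (iter_zero _ _) (iter_zero _ _)

lemma substack_of_pop2 {t u s : Stack2 A} (h : Substack t u) (h2 : pop2 s = some u) :
    Substack t s := by
  obtain ⟨m, y, n, hm, hn⟩ := substack_elim h
  refine substack_mk (m := m + 1) ?_ hn
  rw [iter_succ, h2, Option.bind_some]
  exact hm

lemma substack_of_pop1_iter {n : ℕ} {s t : Stack2 A} (h : iter pop1 n s = some t) :
    Substack t s :=
  substack_mk (iter_zero _ _) h

lemma substack_length {t s : Stack2 A} (h : Substack t s) : t.length ≤ s.length := by
  obtain ⟨m, y, n, hm, hn⟩ := substack_elim h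
  have := iter_pop2_length hm
  have := iter_pop1_length hn
  omega

lemma substack_take {s : Stack2 A} {p : ℕ} (h0 : 0 < p) (hp : p ≤ s.length) :
    Substack (s.take p) s := by
  rcases eq_or_lt_of_le hp with h | h
  · rw [h, List.take_length]; exact substack_refl s
  · have hm : s.length - p < s.length := by omega
    have := iter_pop2_take (s.length - p) hm
    rw [show s.length - (s.length - p) = p by omega] at this
    exact substack_mk this (iter_zero _ _)

/-! #### Deviating stacks -/

/-- `u` deviates from the stack `D ++ [w]` : same body `D`, but the top word of `u`
does not extend `w`. -/
def Dev (D : Stack2 A) (w : Word A) (u : Stack2 A) : Prop :=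
  u.dropLast = D ∧ ¬ (w <+: u.getLastD [])

lemma not_dev_self {s : Stack2 A} : ¬ Dev s.dropLast (s.getLastD []) s :=
  fun h => h.2 (List.prefix_refl _)

lemma dev_of_iter_pop1 {m : ℕ} {s t : Stack2 A} (hm : 0 < m) (h : iter pop1 m s = some t) :
    Dev s.dropLast (s.getLastD []) t := by
  obtain ⟨hd, _, hlen⟩ := iter_pop1_spec h
  refine ⟨hd, fun hc => ?_⟩
  have := hc.length_le
  omega

lemma ne_of_iter_pop1 {m : ℕ} {s t : Stack2 A} (hm : 0 < m) (h : iter pop1 m s = some t) :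
    t ≠ s := by
  obtain ⟨_, _, hlen⟩ := iter_pop1_spec h
  intro he
  rw [he] at hlen
  omega

/-! #### Run lemmas -/

lemma stk_app (ρ : Run S) {i : ℕ} (h : i < ρ.len) :
    applyOp S.bot (ρ.op i) (ρ.stk i) = some (ρ.stk (i + 1)) := by
  obtain ⟨σ, _, _, happ⟩ := ρ.ok i h
  exact happ

lemma stk_ne_nil (ρ : Run S) {i : ℕ} (h : i < ρ.len) : ρ.stk i ≠ [] := by
  obtain ⟨σ, hsym, _, _⟩ := ρ.ok i h
  intro hn
  unfold symS top1 at hsym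
  rw [show (ρ.cfg i).2 = ρ.stk i from rfl, hn] at hsym
  simp at hsym

lemma stk_ne_nil' (ρ : Run S) {i : ℕ} (hi : i ≤ ρ.len) (h0 : 0 < ρ.len) : ρ.stk i ≠ [] := by
  rcases lt_or_eq_of_le hi with h | h
  · exact stk_ne_nil ρ h
  · subst h
    have h1 : ρ.len - 1 < ρ.len := by omega
    have := stk_app ρ h1
    rw [show ρ.len - 1 + 1 = ρ.len by omega] at this
    exact applyOp_ne_nil this

/-! #### Prefix preservation -/

lemma take_dropLast' {l : Stack2 A} {n : ℕ} (h : n ≤ l.length - 1) :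
    l.dropLast.take n = l.take n := by
  rw [List.dropLast_eq_take, List.take_take, min_eq_left h]

lemma applyOp_take {bot : A} {op : Op A} {s t : Stack2 A} {W : ℕ}
    (h : applyOp bot op s = some t) (hW : W < t.length) : t.take W = s.take W := by
  cases op with
  | clone2 =>
      obtain ⟨w, hg, rfl⟩ := clone2_eq_some h
      have : W ≤ s.length := by simp at hW; omega
      exact List.take_append_of_le_length this
  | pop1 =>
      obtain ⟨w, hg, hw, rfl⟩ := pop1_eq_some h
      have h1 : W ≤ s.dropLast.length := by simp at hW; have hdl := s.length_dropLast; omega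
      rw [List.take_append_of_le_length h1, take_dropLast']
      rw [s.length_dropLast] at h1; exact h1
  | pop2 =>
      obtain ⟨h1, rfl⟩ := pop2_eq_some h
      have h2 : W ≤ s.length - 1 := by rw [s.length_dropLast] at hW; omega
      exact take_dropLast' h2
  | collapse =>
      rcases collapse_eq_some h with ⟨σ, _, hp⟩ | ⟨σ, κ, htop, hκ, rfl⟩
      · obtain ⟨w, hg, hw, rfl⟩ := pop1_eq_some hp
        have h1 : W ≤ s.dropLast.length := by simp at hW; have hdl := s.length_dropLast; omega
        rw [List.take_append_of_le_length h1, take_dropLast']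
        rw [s.length_dropLast] at h1; exact h1
      · have h1 : W ≤ κ := by rw [s.length_take] at hW; omega
        rw [List.take_take, min_eq_left h1]
  | push1 a =>
      obtain ⟨w, hg, rfl⟩ := push1_eq_some h
      have h1 : W ≤ s.dropLast.length := by simp at hW; have hdl := s.length_dropLast; omega
      rw [List.take_append_of_le_length h1, take_dropLast']
      rw [s.length_dropLast] at h1; exact h1
  | push2 a =>
      obtain ⟨w, hg, rfl⟩ := push2_eq_some h
      have h1 : W ≤ s.dropLast.length := by simp at hW; have hdl := s.length_dropLast; omega
      rw [List.take_append_of_le_length h1, take_dropLast']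
      rw [s.length_dropLast] at h1; exact h1

lemma take_back (ρ : Run S) (W' : ℕ) :
    ∀ c, c ≤ ρ.len → ∀ e, e ≤ c → (ρ.stk e).length ≤ W' →
      ∃ e', e ≤ e' ∧ e' ≤ c ∧ ρ.stk e' = (ρ.stk c).take W' := by
  intro c
  induction c with
  | zero =>
      intro _ e he hl
      obtain rfl : e = 0 := Nat.le_zero.mp he
      exact ⟨0, le_refl _, le_refl _, (List.take_of_length_le hl).symm⟩
  | succ c ih =>
      intro hc e he hl
      by_cases hlen : (ρ.stk (c + 1)).length ≤ W'
      · exact ⟨c + 1, he, le_refl _, (List.take_of_length_le hlen).symm⟩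
      · push_neg at hlen
        have hstep : applyOp S.bot (ρ.op c) (ρ.stk c) = some (ρ.stk (c + 1)) :=
          stk_app ρ (by omega)
        have htk := applyOp_take hstep hlen
        have he' : e ≤ c := by
          rcases Nat.lt_or_ge e (c + 1) with h | h
          · omega
          · exfalso
            have : e = c + 1 := by omega
            rw [this] at hl
            omega
        obtain ⟨e', h1, h2, h3⟩ := ih (by omega) e he' hl
        exact ⟨e', h1, by omega, by rw [h3, htk]⟩

lemma chain_take (ρ : Run S) (W' : ℕ) :
    ∀ (d a : ℕ), a + d ≤ ρ.len → (∀ l, a < l → l ≤ a + d → W' < (ρ.stk l).length) →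
      (ρ.stk (a + d)).take W' = (ρ.stk a).take W' := by
  intro d
  induction d with
  | zero => intro a _ _; rfl
  | succ d ih =>
      intro a h hl
      have hstep := stk_app ρ (show a + d < ρ.len by omega)
      have h1 : (ρ.stk (a + d + 1)).take W' = (ρ.stk (a + d)).take W' :=
        applyOp_take hstep (hl (a + d + 1) (by omega) (by omega))
      rw [show a + (d + 1) = a + d + 1 from rfl, h1]
      exact ih a (by omega) (fun l hl1 hl2 => hl l hl1 (by omega))

/-! #### Least/greatest helpers -/

lemma exists_least {P : ℕ → Prop} (h : ∃ n, P n) : ∃ n, P n ∧ ∀ m, m < n → ¬ P m := by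
  classical
  exact ⟨Nat.find h, Nat.find_spec h, fun m hm => Nat.find_min h hm⟩

lemma exists_greatest {P : ℕ → Prop} {b m0 : ℕ} (hm0 : m0 ≤ b) (h : P m0) :
    ∃ n, m0 ≤ n ∧ n ≤ b ∧ P n ∧ ∀ m, n < m → m ≤ b → ¬ P m := by
  classical
  refine ⟨Nat.findGreatest P b, ?_, Nat.findGreatest_le _, Nat.findGreatest_spec hm0 h,
    fun m hm hmb => Nat.findGreatest_is_greatest hm hmb⟩
  by_contra hlt
  push_neg at hlt
  exact Nat.findGreatest_is_greatest hlt hm0 h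

/-! #### Prefix helpers -/

lemma prefix_snoc_eq {β : Type} {a z : List β} {x y : β} (h1 : a ++ [x] <+: z)
    (h2 : a ++ [y] <+: z) : x = y := by
  have e1 := List.prefix_iff_eq_take.mp h1
  have e2 := List.prefix_iff_eq_take.mp h2
  have hlen : (a ++ [x]).length = (a ++ [y]).length := by simp
  have : a ++ [x] = a ++ [y] := by rw [e1, e2, hlen]
  simpa using this

lemma prefix_dropLast_of_le {β : Type} {w wl : List β} (h : w <+: wl)
    (hlen : w.length ≤ wl.length - 1) : w <+: wl.dropLast := by
  rw [List.prefix_iff_eq_take, List.dropLast_eq_take, List.take_take, min_eq_left hlen]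
  exact List.prefix_iff_eq_take.mp h

/-! #### The central entry lemma -/

/-- If a run stays (strictly between `e` and `T`) away from stacks deviating from
`ρ.stk e`, away from the body `D` of `ρ.stk e`, and at `T` reaches a deviating stack,
then the step into `T` is a `Pop₁` (or a level-1 collapse) applied to `ρ.stk e` itself. -/
lemma core (ρ : Run S) {e T : ℕ} (heT : e < T) (hT : T ≤ ρ.len)
    (hne : ρ.stk e ≠ [])
    (hW : ∀ i, e < i → i < T → ¬ Dev (ρ.stk e).dropLast ((ρ.stk e).getLastD []) (ρ.stk i))
    (hWT : Dev (ρ.stk e).dropLast ((ρ.stk e).getLastD []) (ρ.stk T))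
    (hD : ∀ i, e ≤ i → i < T → ρ.stk i ≠ (ρ.stk e).dropLast) :
    ρ.stk (T - 1) = ρ.stk e ∧ pop1 (ρ.stk e) = some (ρ.stk T) ∧
      (ρ.op (T - 1) = Op.pop1 ∨
        (ρ.op (T - 1) = Op.collapse ∧ lvlS (ρ.stk e) = some 1)) := by
  set D := (ρ.stk e).dropLast with hDdef
  set w := (ρ.stk e).getLastD [] with hwdef
  have hse : ρ.stk e = D ++ [w] := stack_decomp hne
  have hT1 : T - 1 < ρ.len := by omega
  have hstep : applyOp S.bot (ρ.op (T - 1)) (ρ.stk (T - 1)) = some (ρ.stk T) := by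
    have := stk_app ρ hT1
    rw [show T - 1 + 1 = T by omega] at this
    exact this
  have hTne : ρ.stk T ≠ [] := by
    rcases lt_or_eq_of_le hT with h | h
    · exact stk_ne_nil ρ h
    · rw [h] at hstep ⊢
      exact applyOp_ne_nil hstep
  have hTd : ρ.stk T = D ++ [(ρ.stk T).getLastD []] := by
    rw [← hWT.1]
    exact stack_decomp hTne
  have hlenT : (ρ.stk T).length = D.length + 1 := by rw [hTd]; simp
  have hlene : (ρ.stk e).length = D.length + 1 := by rw [hse]; simp
  have devContra : ∀ i, e ≤ i → i < T → ¬ Dev D w (ρ.stk i) := by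
    intro i hi1 hi2
    rcases eq_or_lt_of_le hi1 with h | h
    · rw [← h]
      exact fun hdev => hdev.2 (List.prefix_refl _)
    · exact hW _ h hi2
  have takeContra : ρ.stk T = (ρ.stk (T - 1)).take (ρ.stk T).length → False := by
    intro htake
    obtain ⟨e', he1, he2, he3⟩ :=
      take_back ρ (ρ.stk T).length (T - 1) (by omega) e (by omega) (by omega)
    refine devContra e' he1 (by omega) ?_
    rw [show ρ.stk e' = ρ.stk T by rw [he3, ← htake]]
    exact hWT
  have popCase : pop1 (ρ.stk (T - 1)) = some (ρ.stk T) → ρ.stk (T - 1) = ρ.stk e := by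
    intro hp
    obtain ⟨wl, hg, hlw, hu⟩ := pop1_eq_some hp
    have hd : (ρ.stk (T - 1)).dropLast = D := by rw [← hWT.1, hu, List.dropLast_concat]
    have hAdec : ρ.stk (T - 1) = D ++ [wl] := by
      rw [← hd]
      exact getLast?_decomp hg
    have hlastT : (ρ.stk T).getLastD [] = wl.dropLast := by
      rw [hu]
      exact List.getLastD_concat
    have hwwl : w <+: wl := by
      by_contra hc
      exact devContra (T - 1) (by omega) (by omega)
        ⟨hd, by rw [getLastD_of_getLast? hg]; exact hc⟩
    have hlen2 : wl.length ≤ w.length := by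
      by_contra hlen
      push_neg at hlen
      have : w <+: wl.dropLast := prefix_dropLast_of_le hwwl (by omega)
      exact hWT.2 (by rw [hlastT]; exact this)
    have hwe : w = wl := hwwl.eq_of_length_le hlen2
    rw [hAdec, ← hwe]
    exact hse.symm
  cases hop : ρ.op (T - 1) with
  | clone2 =>
      rw [hop] at hstep
      obtain ⟨wl, hg, hu⟩ := clone2_eq_some hstep
      have : ρ.stk (T - 1) = D := by rw [← hWT.1, hu, List.dropLast_concat]
      exact absurd this (hD (T - 1) (by omega) (by omega))
  | pop1 =>
      rw [hop] at hstep
      have hAe := popCase hstep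
      refine ⟨hAe, by rw [← hAe]; exact hstep, Or.inl rfl⟩
  | pop2 =>
      rw [hop] at hstep
      obtain ⟨hl1, hu⟩ := pop2_eq_some hstep
      exfalso
      apply takeContra
      have hlen : (ρ.stk T).length = (ρ.stk (T - 1)).length - 1 := by
        rw [hu, List.length_dropLast]
      rw [hlen, hu, List.dropLast_eq_take]
  | collapse =>
      rw [hop] at hstep
      rcases collapse_eq_some hstep with ⟨σ, htop, hp⟩ | ⟨σ, κ, htop, hκ, hu⟩
      · have hAe := popCase hp
        refine ⟨hAe, by rw [← hAe]; exact hp, Or.inr ⟨rfl, ?_⟩⟩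
        rw [← hAe]
        unfold lvlS
        rw [htop]
        rfl
      · exfalso
        rcases Nat.lt_or_ge κ (ρ.stk (T - 1)).length with hlt | hge
        · apply takeContra
          have hlen : (ρ.stk T).length = κ := by rw [hu, List.length_take]; omega
          rw [hlen, hu]
        · have heq : ρ.stk T = ρ.stk (T - 1) := by
            rw [hu]
            exact List.take_of_length_le (by omega)
          refine devContra (T - 1) (by omega) (by omega) ?_
          rw [← heq]
          exact hWT
  | push1 a =>
      rw [hop] at hstep
      obtain ⟨wl, hg, hu⟩ := push1_eq_some hstep
      exfalso
      have hd : (ρ.stk (T - 1)).dropLast = D := by rw [← hWT.1, hu, List.dropLast_concat]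
      have hlast : (ρ.stk T).getLastD [] = wl ++ [Sum.inl a] := by
        rw [hu]
        exact List.getLastD_concat
      refine devContra (T - 1) (by omega) (by omega) ⟨hd, fun hc => ?_⟩
      apply hWT.2
      rw [getLastD_of_getLast? hg] at hc
      rw [hlast]
      exact hc.trans (List.prefix_append _ _)
  | push2 a =>
      rw [hop] at hstep
      obtain ⟨wl, hg, hu⟩ := push2_eq_some hstep
      exfalso
      have hd : (ρ.stk (T - 1)).dropLast = D := by rw [← hWT.1, hu, List.dropLast_concat]
      have hlast : (ρ.stk T).getLastD [] = wl ++ [Sum.inr (a, (ρ.stk (T - 1)).length - 1)] := by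
        rw [hu]
        exact List.getLastD_concat
      refine devContra (T - 1) (by omega) (by omega) ⟨hd, fun hc => ?_⟩
      apply hWT.2
      rw [getLastD_of_getLast? hg] at hc
      rw [hlast]
      exact hc.trans (List.prefix_append _ _)

/-! #### High loops -/

lemma mk_high_loop (ρ : Run S) {e b : ℕ} (heb : e ≤ b) (hb : b ≤ ρ.len)
    (hstk : ρ.stk b = ρ.stk e)
    (hpop : ∀ i m, e ≤ i → i ≤ b → 0 < m → iter pop1 m (ρ.stk e) ≠ some (ρ.stk i))
    (hnosub2 : ∀ i t, e ≤ i → i ≤ b → pop2 (ρ.stk e) = some t → ¬ Substack (ρ.stk i) t) :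
    HighLoopSeg ρ e b := by
  refine ⟨⟨heb, hb, hstk, fun k hk1 hk2 t hp => hnosub2 k t hk1 hk2 hp, ?_⟩, ?_⟩
  · intro k hk1 hk2 m hm t ht hkt
    exfalso
    exact hpop k m hk1 hk2 hm (ht.trans (by rw [hkt]))
  · intro k hk1 hk2 t ht hkt
    exact hpop k 1 hk1 hk2 one_pos (by rw [iter_one, ht, hkt])

lemma high_no_pop (ρ : Run S) {α β : ℕ} (hβ : β ≤ ρ.len) (hl : HighLoopSeg ρ α β)
    {i m : ℕ} (hαi : α ≤ i) (hiβ : i ≤ β) (hm : 0 < m)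
    (ht : iter pop1 m (ρ.stk α) = some (ρ.stk i)) : False := by
  obtain ⟨loop, high⟩ := hl
  have hα_ne : ρ.stk α ≠ [] := by
    obtain ⟨r, h1, h2⟩ := Option.bind_eq_some_iff.mp
      (by rw [← iter_succ, show m - 1 + 1 = m by omega]; exact ht :
        (pop1 (ρ.stk α)).bind (iter pop1 (m - 1)) = some (ρ.stk i))
    obtain ⟨wl, hg, _, _⟩ := pop1_eq_some h1
    rintro hnil
    rw [hnil] at hg
    simp at hg
  have hdev : Dev (ρ.stk α).dropLast ((ρ.stk α).getLastD []) (ρ.stk i) :=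
    dev_of_iter_pop1 hm ht
  have hiα : α < i := by
    rcases eq_or_lt_of_le hαi with h | h
    · exfalso
      rw [← h] at hdev
      exact not_dev_self hdev
    · exact h
  obtain ⟨T, ⟨hT1, hT2, hTdev⟩, hmin⟩ :=
    exists_least (P := fun T =>
      α < T ∧ T ≤ β ∧ Dev (ρ.stk α).dropLast ((ρ.stk α).getLastD []) (ρ.stk T))
      ⟨i, hiα, hiβ, hdev⟩
  have hWcond : ∀ j, α < j → j < T →
      ¬ Dev (ρ.stk α).dropLast ((ρ.stk α).getLastD []) (ρ.stk j) := by
    intro j hj1 hj2 hdevj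
    exact hmin j hj2 ⟨hj1, by omega, hdevj⟩
  have hDcond : ∀ j, α ≤ j → j < T → ρ.stk j ≠ (ρ.stk α).dropLast := by
    intro j hj1 hj2 hjD
    rcases Nat.lt_or_ge 1 (ρ.stk α).length with hgt | hle
    · have hp2 : pop2 (ρ.stk α) = some (ρ.stk α).dropLast := pop2_def hgt
      exact loop.2.2.2.1 j hj1 (by omega) _ hp2 (by rw [hjD]; exact substack_refl _)
    · have hdl : (ρ.stk α).dropLast = [] := by
        have h1 := (ρ.stk α).length_dropLast
        exact List.eq_nil_of_length_eq_zero (by omega)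
      exact stk_ne_nil ρ (show j < ρ.len by omega) (by rw [hjD, hdl])
  obtain ⟨_, hpop, _⟩ := core ρ hT1 (le_trans hT2 hβ) hα_ne hWcond hTdev hDcond
  exact high T hT1.le hT2 (ρ.stk T) hpop rfl

/-! #### `IsStack` invariants -/

lemma isStack_facts {bot : A} : ∀ {s : Stack2 A}, IsStack bot s →
    s ≠ [] ∧ ∀ w ∈ s, w ≠ [] := by
  intro s h
  induction h with
  | base =>
      refine ⟨by simp [bottom2], ?_⟩
      intro w hw
      simp [bottom2] at hw
      rw [hw]
      simp
  | @step s t op hs happ ih =>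
      cases op with
      | clone2 =>
          obtain ⟨wl, hg, rfl⟩ := clone2_eq_some happ
          have hwl : wl ∈ s := by
            rw [getLast?_decomp hg]
            simp
          refine ⟨by simp, ?_⟩
          intro x hx
          rcases List.mem_append.mp hx with h1 | h1
          · exact ih.2 x h1
          · rw [List.mem_singleton.mp h1]
            exact ih.2 wl hwl
      | pop1 =>
          obtain ⟨wl, hg, hlw, rfl⟩ := pop1_eq_some happ
          refine ⟨by simp, ?_⟩
          intro x hx
          rcases List.mem_append.mp hx with h1 | h1
          · exact ih.2 x ((List.dropLast_sublist s).subset h1)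
          · rw [List.mem_singleton.mp h1]
            intro hnil
            have := wl.length_dropLast
            rw [hnil] at this
            simp at this
            omega
      | pop2 =>
          obtain ⟨h1, rfl⟩ := pop2_eq_some happ
          refine ⟨?_, ?_⟩
          · intro hnil
            have := s.length_dropLast
            rw [hnil] at this
            simp at this
            omega
          · intro x hx
            exact ih.2 x ((List.dropLast_sublist s).subset hx)
      | collapse =>
          rcases collapse_eq_some happ with ⟨σ, htop, hp⟩ | ⟨σ, κ, htop, hκ, rfl⟩
          · obtain ⟨wl, hg, hlw, rfl⟩ := pop1_eq_some hp
            refine ⟨by simp, ?_⟩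
            intro x hx
            rcases List.mem_append.mp hx with h1 | h1
            · exact ih.2 x ((List.dropLast_sublist s).subset h1)
            · rw [List.mem_singleton.mp h1]
              intro hnil
              have := wl.length_dropLast
              rw [hnil] at this
              simp at this
              omega
          · refine ⟨?_, fun x hx => ih.2 x (List.take_subset _ _ hx)⟩
            intro hnil
            have hmin : min κ s.length = 0 := by rw [← List.length_take (i := κ) (l := s), hnil]; rfl
            rcases Nat.min_eq_zero_iff.mp hmin with h1 | h1
            · omega
            · exact ih.1 (List.eq_nil_of_length_eq_zero h1)
      | push1 a =>
          obtain ⟨wl, hg, rfl⟩ := push1_eq_some happ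
          refine ⟨by simp, ?_⟩
          intro x hx
          rcases List.mem_append.mp hx with h1 | h1
          · exact ih.2 x ((List.dropLast_sublist s).subset h1)
          · rw [List.mem_singleton.mp h1]
            simp
      | push2 a =>
          obtain ⟨wl, hg, rfl⟩ := push2_eq_some happ
          refine ⟨by simp, ?_⟩
          intro x hx
          rcases List.mem_append.mp hx with h1 | h1
          · exact ih.2 x ((List.dropLast_sublist s).subset h1)
          · rw [List.mem_singleton.mp h1]
            simp

lemma run_isStack (ρ : Run S) (h0 : IsStack S.bot (ρ.stk 0)) :
    ∀ i, i ≤ ρ.len → IsStack S.bot (ρ.stk i) := by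
  intro i
  induction i with
  | zero => intro _; exact h0
  | succ i ih =>
      intro h
      exact IsStack.step (ρ.op i) (ih (by omega)) (stk_app ρ (by omega))

/-! #### The downward decomposition -/

lemma down_seg (ρ : Run S)
    (Hg : ∀ i, i < ρ.len → ¬ Substack (ρ.stk i) (ρ.stk ρ.len)) :
    ∀ (k e : ℕ), e ≤ ρ.len → iter pop1 k (ρ.stk e) = some (ρ.stk ρ.len) →
      ∃ (n : ℕ) (idx : ℕ → ℕ), idx 0 = e ∧ idx (2 * n) = ρ.len ∧
        (∀ i, i < 2 * n → idx i ≤ idx (i + 1)) ∧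
        ∀ i, i < n →
          HighLoopSeg ρ (idx (2 * i)) (idx (2 * i + 1)) ∧
          idx (2 * i + 2) = idx (2 * i + 1) + 1 ∧
          (ρ.op (idx (2 * i + 1)) = Op.pop1 ∨
            (ρ.op (idx (2 * i + 1)) = Op.collapse ∧
              lvlS (ρ.stk (idx (2 * i + 1))) = some 1)) := by
  intro k
  induction k with
  | zero =>
      intro e he hk
      have heq : ρ.stk e = ρ.stk ρ.len := Option.some.inj hk
      have hel : e = ρ.len := by
        by_contra hne
        exact Hg e (by omega) (by rw [heq]; exact substack_refl _)
      exact ⟨0, fun _ => ρ.len, by rw [hel], rfl, fun i hi => le_refl _,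
        fun i hi => absurd hi (Nat.not_lt_zero i)⟩
  | succ k ih =>
      intro e he hk
      have hne_ev : ρ.stk e ≠ ρ.stk ρ.len := by
        intro hev
        obtain ⟨_, _, hlen⟩ := iter_pop1_spec hk
        rw [hev] at hlen
        omega
      have helt : e < ρ.len := by
        rcases eq_or_lt_of_le he with h | h
        · exact absurd (by rw [h]) hne_ev
        · exact h
      have hne : ρ.stk e ≠ [] := stk_ne_nil ρ helt
      have hdev_v : Dev (ρ.stk e).dropLast ((ρ.stk e).getLastD []) (ρ.stk ρ.len) :=
        dev_of_iter_pop1 (by omega) hk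
      obtain ⟨T, ⟨hT1, hT2, hTdev⟩, hmin⟩ :=
        exists_least (P := fun T => e < T ∧ T ≤ ρ.len ∧
          Dev (ρ.stk e).dropLast ((ρ.stk e).getLastD []) (ρ.stk T))
          ⟨ρ.len, helt, le_refl _, hdev_v⟩
      have hWcond : ∀ j, e < j → j < T →
          ¬ Dev (ρ.stk e).dropLast ((ρ.stk e).getLastD []) (ρ.stk j) :=
        fun j hj1 hj2 hdevj => hmin j hj2 ⟨hj1, by omega, hdevj⟩
      obtain ⟨hdrop_eq, _, _⟩ := iter_pop1_spec hk
      have hlen_ev : (ρ.stk ρ.len).length = (ρ.stk e).length := iter_pop1_length hk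
      have hp2v : 1 < (ρ.stk e).length → pop2 (ρ.stk ρ.len) = some (ρ.stk e).dropLast := by
        intro hgt
        rw [← hdrop_eq]
        exact pop2_def (by omega)
      have hDcond : ∀ j, e ≤ j → j < T → ρ.stk j ≠ (ρ.stk e).dropLast := by
        intro j hj1 hj2 hjD
        rcases Nat.lt_or_ge 1 (ρ.stk e).length with hgt | hle
        · refine Hg j (by omega) ?_
          rw [hjD]
          exact substack_mk (m := 1) (n := 0) (by rw [iter_one]; exact hp2v hgt)
            (iter_zero _ _)
        · have hdl : (ρ.stk e).dropLast = [] :=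
            List.eq_nil_of_length_eq_zero (by have := (ρ.stk e).length_dropLast; omega)
          exact stk_ne_nil ρ (show j < ρ.len by omega) (by rw [hjD, hdl])
      obtain ⟨hTback, hTpop, hTop⟩ := core ρ hT1 hT2 hne hWcond hTdev hDcond
      have hrT : iter pop1 k (ρ.stk T) = some (ρ.stk ρ.len) := by
        rw [iter_succ, hTpop, Option.bind_some] at hk
        exact hk
      obtain ⟨n, idx, hi0, hiN, hmono, hprops⟩ := ih T hT2 hrT
      have hHL : HighLoopSeg ρ e (T - 1) := by
        apply mk_high_loop ρ (show e ≤ T - 1 by omega) (by omega) hTback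
        · intro i m hi1 hi2 hm hit
          have hdev := dev_of_iter_pop1 hm hit
          rcases eq_or_lt_of_le hi1 with h | h
          · rw [← h] at hdev
            exact not_dev_self hdev
          · exact hWcond i h (by omega) hdev
        · intro i t hi1 hi2 hp2 hsub
          obtain ⟨hgt, ht⟩ := pop2_eq_some hp2
          refine Hg i (by omega) ?_
          refine substack_of_pop2 hsub ?_
          rw [ht]
          exact hp2v hgt
      refine ⟨n + 1, fun j => match j with
        | 0 => e
        | 1 => T - 1
        | (j + 2) => idx j, rfl, ?_, ?_, ?_⟩
      · rw [show 2 * (n + 1) = (2 * n) + 2 by ring]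
        exact hiN
      · intro i hi
        rcases i with _ | (_ | i)
        · show e ≤ T - 1
          omega
        · show T - 1 ≤ idx 0
          rw [hi0]
          omega
        · show idx i ≤ idx (i + 1)
          exact hmono i (by omega)
      · intro i hi
        rcases i with _ | i
        · refine ⟨hHL, ?_, ?_⟩
          · show idx 0 = (T - 1) + 1
            rw [hi0]
            omega
          · show ρ.op (T - 1) = Op.pop1 ∨
              (ρ.op (T - 1) = Op.collapse ∧ lvlS (ρ.stk (T - 1)) = some 1)
            rcases hTop with h | ⟨h1, h2⟩
            · exact Or.inl h
            · exact Or.inr ⟨h1, by rw [hTback]; exact h2⟩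
        · obtain ⟨p1, p2, p3⟩ := hprops i (by omega)
          exact ⟨p1, p2, p3⟩

/-! #### The upward decomposition -/

lemma up_seg (ρ : Run S) :
    ∀ (k e : ℕ), e ≤ ρ.len → iter pop1 k (ρ.stk ρ.len) = some (ρ.stk e) →
      (∀ i, e ≤ i → i ≤ ρ.len → ¬ ProperSubstack (ρ.stk i) (ρ.stk e)) →
      ∃ (n : ℕ) (idx : ℕ → ℕ), idx 0 = e ∧ idx (2 * n + 1) = ρ.len ∧
        (∀ i, i < 2 * n + 1 → idx i ≤ idx (i + 1)) ∧
        (∀ i, i ≤ n → HighLoopSeg ρ (idx (2 * i)) (idx (2 * i + 1))) ∧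
        (∀ i, i < n → idx (2 * i + 2) = idx (2 * i + 1) + 1 ∧
          ∃ a : A, ρ.op (idx (2 * i + 1)) = Op.push1 a ∨ ρ.op (idx (2 * i + 1)) = Op.push2 a) := by
  intro k
  induction k with
  | zero =>
      intro e he hk hprop
      have heq : ρ.stk ρ.len = ρ.stk e := Option.some.inj hk
      have hHL : HighLoopSeg ρ e ρ.len := by
        apply mk_high_loop ρ he (le_refl _) heq
        · intro i m hi1 hi2 hm hit
          exact hprop i hi1 hi2 ⟨substack_of_pop1_iter hit, ne_of_iter_pop1 hm hit⟩
        · intro i t hi1 hi2 hp2 hsub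
          obtain ⟨hgt, ht⟩ := pop2_eq_some hp2
          refine hprop i hi1 hi2 ⟨substack_of_pop2 hsub hp2, ?_⟩
          intro hie
          have hl1 := substack_length hsub
          rw [hie, ht, List.length_dropLast] at hl1
          omega
      refine ⟨0, fun j => match j with | 0 => e | _ => ρ.len, rfl, rfl, ?_, ?_, ?_⟩
      · intro i hi
        rcases i with _ | i
        · exact he
        · exact absurd hi (by omega)
      · intro i hi
        obtain rfl : i = 0 := Nat.le_zero.mp hi
        exact hHL
      · intro i hi
        exact absurd hi (Nat.not_lt_zero i)
  | succ k ih =>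
      intro e he hk hprop
      have hk0 := hk
      rw [iter_succ'] at hk
      obtain ⟨s', hks', hps'⟩ := Option.bind_eq_some_iff.mp hk
      obtain ⟨wl', hg', hlw', hs'e⟩ := pop1_eq_some hps'
      have hs'ne : s' ≠ [] := by
        intro hnil
        rw [hnil] at hg'
        simp at hg'
      have hD : (ρ.stk e).dropLast = s'.dropLast := by rw [hs'e, List.dropLast_concat]
      have hw : (ρ.stk e).getLastD [] = wl'.dropLast := by rw [hs'e, List.getLastD_concat]
      have hs'dec : s' = (ρ.stk e).dropLast ++ [wl'] := by
        rw [hD]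
        exact getLast?_decomp hg'
      have hwl'ne : wl' ≠ [] := by
        intro h
        rw [h] at hlw'
        simp at hlw'
      have hwl'dec : wl' = (ρ.stk e).getLastD [] ++ [wl'.getLast hwl'ne] := by
        rw [hw]
        exact (List.dropLast_append_getLast hwl'ne).symm
      have hne_e : ρ.stk e ≠ [] := by rw [hs'e]; simp
      have hlen_e : (ρ.stk e).length = (ρ.stk e).dropLast.length + 1 := by
        have := (ρ.stk e).length_dropLast
        have := List.length_pos_iff.mpr hne_e
        omega
      have hlen_s' : s'.length = (ρ.stk e).length := by
        rw [hs'dec, List.length_append, List.length_singleton]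
        omega
      obtain ⟨T0, hT0ge, hT0le, hT0eq, hT0max⟩ :=
        exists_greatest (P := fun i => ρ.stk i = ρ.stk e) he rfl
      have hzne : ρ.stk ρ.len ≠ ρ.stk e := by
        intro hz
        obtain ⟨_, _, hlen⟩ := iter_pop1_spec hk0
        rw [hz] at hlen
        omega
      have hT0lt : T0 < ρ.len := by
        rcases eq_or_lt_of_le hT0le with h | h
        · exfalso
          apply hzne
          rw [← h]
          exact hT0eq
        · exact h
      have hstep : applyOp S.bot (ρ.op T0) (ρ.stk e) = some (ρ.stk (T0 + 1)) := by
        have := stk_app ρ hT0lt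
        rw [hT0eq] at this
        exact this
      have hsubC : ∀ i, e ≤ i → i ≤ ρ.len → Substack (ρ.stk i) (ρ.stk e) →
          ρ.stk i ≠ ρ.stk e → False :=
        fun i h1 h2 h3 h4 => hprop i h1 h2 ⟨h3, h4⟩
      -- shared treatment of the push cases
      have pushKey : ∀ x : Letter A,
          ρ.stk (T0 + 1) = (ρ.stk e).dropLast ++ [(ρ.stk e).getLastD [] ++ [x]] →
          ρ.stk (T0 + 1) = s' := by
        intro x hx
        by_cases hxs : ρ.stk (T0 + 1) = s'
        · exact hxs
        · exfalso
          have hd1 : (ρ.stk (T0 + 1)).dropLast = (ρ.stk e).dropLast := by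
            rw [hx, List.dropLast_concat]
          have hw1 : (ρ.stk (T0 + 1)).getLastD [] = (ρ.stk e).getLastD [] ++ [x] := by
            rw [hx, List.getLastD_concat]
          have hzdev : Dev (ρ.stk (T0 + 1)).dropLast ((ρ.stk (T0 + 1)).getLastD [])
              (ρ.stk ρ.len) := by
            constructor
            · obtain ⟨hzd, _, _⟩ := iter_pop1_spec hk0
              rw [hd1]
              exact hzd.symm
            · rw [hw1]
              intro hpre
              obtain ⟨_, hpre', _⟩ := iter_pop1_spec hks'
              have hx0 : (ρ.stk e).getLastD [] ++ [wl'.getLast hwl'ne] <+: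
                  (ρ.stk ρ.len).getLastD [] := by
                rw [← hwl'dec, ← getLastD_of_getLast? hg']
                exact hpre'
              have hxeq := prefix_snoc_eq hpre hx0
              apply hxs
              rw [hx, hs'dec, hwl'dec, hxeq]
          have hT01lt_len : T0 + 1 < ρ.len := by
            rcases eq_or_lt_of_le (show T0 + 1 ≤ ρ.len by omega) with h | h
            · exfalso
              rw [← h] at hzdev
              exact not_dev_self hzdev
            · exact h
          obtain ⟨T, ⟨hT1, hT2, hTdev⟩, hmin⟩ :=
            exists_least (P := fun T => T0 + 1 < T ∧ T ≤ ρ.len ∧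
              Dev (ρ.stk (T0 + 1)).dropLast ((ρ.stk (T0 + 1)).getLastD []) (ρ.stk T))
              ⟨ρ.len, hT01lt_len, le_refl _, hzdev⟩
          have hWc : ∀ j, T0 + 1 < j → j < T →
              ¬ Dev (ρ.stk (T0 + 1)).dropLast ((ρ.stk (T0 + 1)).getLastD []) (ρ.stk j) :=
            fun j h1 h2 hd => hmin j h2 ⟨h1, by omega, hd⟩
          have hDc : ∀ j, T0 + 1 ≤ j → j < T → ρ.stk j ≠ (ρ.stk (T0 + 1)).dropLast := by
            intro j h1 h2 hjD
            rw [hd1] at hjD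
            rcases Nat.lt_or_ge 1 (ρ.stk e).length with hgt | hle
            · refine hsubC j (by omega) (by omega) ?_ ?_
              · rw [hjD]
                exact substack_mk (m := 1) (n := 0) (by rw [iter_one]; exact pop2_def hgt)
                  (iter_zero _ _)
              · intro hje
                have h9 : ρ.stk e = (ρ.stk e).dropLast := hje.symm.trans hjD
                have h10 := congrArg List.length h9
                rw [List.length_dropLast] at h10
                omega
            · refine stk_ne_nil ρ (show j < ρ.len by omega) ?_
              rw [hjD]
              exact List.eq_nil_of_length_eq_zero
                (by have := (ρ.stk e).length_dropLast; omega)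
          have hT01ne : ρ.stk (T0 + 1) ≠ [] := by rw [hx]; simp
          obtain ⟨_, hpopT, _⟩ := core ρ hT1 hT2 hT01ne hWc hTdev hDc
          rw [hx] at hpopT
          by_cases hwnil : (ρ.stk e).getLastD [] = []
          · rw [hwnil] at hpopT
            unfold pop1 at hpopT
            rw [List.getLast?_concat] at hpopT
            simp at hpopT
          · have hlen1 : 1 < ((ρ.stk e).getLastD [] ++ [x]).length := by
              have : 0 < ((ρ.stk e).getLastD []).length := List.length_pos_iff.mpr hwnil
              rw [List.length_append, List.length_singleton]
              omega
            rw [pop1_concat hlen1, List.dropLast_concat] at hpopT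
            have hTe : ρ.stk T = ρ.stk e := by
              have h11 := Option.some.inj hpopT
              rw [← h11]
              exact (stack_decomp hne_e).symm
            exact hT0max T (by omega) (by omega) hTe
      have hmain : ρ.stk (T0 + 1) = s' ∧
          ∃ a : A, ρ.op T0 = Op.push1 a ∨ ρ.op T0 = Op.push2 a := by
        cases hop : ρ.op T0 with
        | pop1 =>
            rw [hop] at hstep
            exfalso
            exact hsubC (T0 + 1) (by omega) (by omega)
              (substack_of_pop1_iter (n := 1) (by rw [iter_one]; exact hstep))
              (ne_of_iter_pop1 one_pos (by rw [iter_one]; exact hstep))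
        | pop2 =>
            rw [hop] at hstep
            exfalso
            obtain ⟨hgt, hu⟩ := pop2_eq_some hstep
            refine hsubC (T0 + 1) (by omega) (by omega) ?_ ?_
            · exact substack_mk (m := 1) (n := 0) (by rw [iter_one]; exact hstep)
                (iter_zero _ _)
            · intro hne2
              have h9 := congrArg List.length hne2.symm
              rw [hu, List.length_dropLast] at h9
              omega
        | collapse =>
            rw [hop] at hstep
            exfalso
            rcases collapse_eq_some hstep with ⟨σ, htop, hp⟩ | ⟨σ, κ, htop, hκ, hu⟩
            · exact hsubC (T0 + 1) (by omega) (by omega)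
                (substack_of_pop1_iter (n := 1) (by rw [iter_one]; exact hp))
                (ne_of_iter_pop1 one_pos (by rw [iter_one]; exact hp))
            · rcases Nat.lt_or_ge κ (ρ.stk e).length with hlt | hge
              · refine hsubC (T0 + 1) (by omega) (by omega) ?_ ?_
                · rw [hu]
                  exact substack_take (by omega) (by omega)
                · intro heq2
                  have hlen2 : (ρ.stk (T0 + 1)).length = κ := by
                    rw [hu, List.length_take]
                    omega
                  rw [heq2] at hlen2
                  omega
              · apply hT0max (T0 + 1) (by omega) (by omega)
                rw [hu]
                exact List.take_of_length_le (by omega)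
        | clone2 =>
            rw [hop] at hstep
            exfalso
            obtain ⟨wc, hgc, huc⟩ := clone2_eq_some hstep
            have hzlen : (ρ.stk ρ.len).length = (ρ.stk e).length :=
              (iter_pop1_length hk0).symm
            obtain ⟨c, ⟨hc1, hc2, hc3⟩, hcmin⟩ :=
              exists_least (P := fun c => T0 < c ∧ c ≤ ρ.len ∧
                (ρ.stk c).length ≤ (ρ.stk e).length)
                ⟨ρ.len, hT0lt, le_refl _, le_of_eq hzlen⟩
            have hT01len : (ρ.stk (T0 + 1)).length = (ρ.stk e).length + 1 := by
              rw [huc, List.length_append]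
              rfl
            have hcgt : T0 + 1 < c := by
              by_contra hcc
              push_neg at hcc
              have h9 : c = T0 + 1 := by omega
              rw [h9, hT01len] at hc3
              omega
            have hstepc : applyOp S.bot (ρ.op (c - 1)) (ρ.stk (c - 1)) = some (ρ.stk c) := by
              have := stk_app ρ (show c - 1 < ρ.len by omega)
              rw [show c - 1 + 1 = c by omega] at this
              exact this
            have hlenc1 : (ρ.stk e).length < (ρ.stk (c - 1)).length := by
              by_contra hh
              push_neg at hh
              exact hcmin (c - 1) (by omega) ⟨by omega, by omega, hh⟩
            have htake : ρ.stk c = (ρ.stk (c - 1)).take (ρ.stk c).length := by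
              cases hoc : ρ.op (c - 1) with
              | pop2 =>
                  rw [hoc] at hstepc
                  obtain ⟨h1, hu⟩ := pop2_eq_some hstepc
                  have h9 : (ρ.stk c).length = (ρ.stk (c - 1)).length - 1 := by
                    rw [hu, List.length_dropLast]
                  rw [h9, hu, List.dropLast_eq_take]
              | collapse =>
                  rw [hoc] at hstepc
                  rcases collapse_eq_some hstepc with ⟨σ, _, hp⟩ | ⟨σ, κ, _, hκ, hu⟩
                  · exfalso
                    have := iter_pop1_length
                      (show iter pop1 1 (ρ.stk (c - 1)) = some (ρ.stk c) by
                        rw [iter_one]; exact hp)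
                    omega
                  · rcases Nat.lt_or_ge κ (ρ.stk (c - 1)).length with hlt | hge
                    · have h9 : (ρ.stk c).length = κ := by
                        rw [hu, List.length_take]
                        omega
                      rw [h9, hu]
                    · exfalso
                      have h9 : ρ.stk c = ρ.stk (c - 1) := by
                        rw [hu]
                        exact List.take_of_length_le (by omega)
                      rw [h9] at hc3
                      omega
              | clone2 =>
                  rw [hoc] at hstepc
                  exfalso
                  obtain ⟨w1, _, hu⟩ := clone2_eq_some hstepc
                  have h9 : (ρ.stk c).length = (ρ.stk (c - 1)).length + 1 := by
                    rw [hu]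
                    simp
                  omega
              | pop1 =>
                  rw [hoc] at hstepc
                  exfalso
                  have := iter_pop1_length
                    (show iter pop1 1 (ρ.stk (c - 1)) = some (ρ.stk c) by
                      rw [iter_one]; exact hstepc)
                  omega
              | push1 a =>
                  rw [hoc] at hstepc
                  exfalso
                  obtain ⟨w1, _, hu⟩ := push1_eq_some hstepc
                  have h5 : (ρ.stk c).length = (ρ.stk (c - 1)).dropLast.length + 1 := by
                    rw [hu]
                    simp
                  have h6 := (ρ.stk (c - 1)).length_dropLast
                  have h7 : ρ.stk (c - 1) ≠ [] := stk_ne_nil ρ (show c - 1 < ρ.len by omega)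
                  have h8 : 0 < (ρ.stk (c - 1)).length := List.length_pos_iff.mpr h7
                  omega
              | push2 a =>
                  rw [hoc] at hstepc
                  exfalso
                  obtain ⟨w1, _, hu⟩ := push2_eq_some hstepc
                  have h5 : (ρ.stk c).length = (ρ.stk (c - 1)).dropLast.length + 1 := by
                    rw [hu]
                    simp
                  have h6 := (ρ.stk (c - 1)).length_dropLast
                  have h7 : ρ.stk (c - 1) ≠ [] := stk_ne_nil ρ (show c - 1 < ρ.len by omega)
                  have h8 : 0 < (ρ.stk (c - 1)).length := List.length_pos_iff.mpr h7
                  omega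
            have hcond : ∀ l, T0 + 1 < l → l ≤ T0 + 1 + (c - 1 - (T0 + 1)) →
                (ρ.stk c).length < (ρ.stk l).length := by
              intro l hl1 hl2
              by_contra hh
              push_neg at hh
              exact hcmin l (by omega) ⟨by omega, by omega, by omega⟩
            have hwalk := chain_take ρ (ρ.stk c).length (c - 1 - (T0 + 1)) (T0 + 1)
              (by omega) hcond
            rw [show T0 + 1 + (c - 1 - (T0 + 1)) = c - 1 by omega] at hwalk
            obtain ⟨L, hL⟩ : ∃ L, (ρ.stk c).length = L := ⟨_, rfl⟩
            have hce : ρ.stk c = (ρ.stk e).take L := by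
              have h1 : ρ.stk c = (ρ.stk (c - 1)).take L := by rw [← hL]; exact htake
              have h2 : (ρ.stk (c - 1)).take L = (ρ.stk (T0 + 1)).take L := by
                rw [← hL]
                exact hwalk
              rw [h1, h2, huc, List.take_append_of_le_length (by omega)]
            rcases eq_or_lt_of_le hc3 with hW | hW
            · apply hT0max c hc1 hc2
              rw [hce, show L = (ρ.stk e).length by omega, List.take_length]
            · have hpos : 0 < L := by
                have := List.length_pos_iff.mpr (stk_ne_nil' ρ hc2 (show 0 < ρ.len by omega))
                omega
              refine hsubC c (by omega) hc2 ?_ ?_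
              · rw [hce]
                exact substack_take hpos (by omega)
              · intro heq2
                have h12 := congrArg List.length heq2
                omega
        | push1 a =>
            rw [hop] at hstep
            obtain ⟨wl, hg, hu⟩ := push1_eq_some hstep
            have hwl_eq : wl = (ρ.stk e).getLastD [] := (getLastD_of_getLast? hg).symm
            have hx : ρ.stk (T0 + 1) =
                (ρ.stk e).dropLast ++ [(ρ.stk e).getLastD [] ++ [Sum.inl a]] := by
              rw [hu, hwl_eq]
            exact ⟨pushKey _ hx, a, Or.inl rfl⟩
        | push2 a =>
            rw [hop] at hstep
            obtain ⟨wl, hg, hu⟩ := push2_eq_some hstep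
            have hwl_eq : wl = (ρ.stk e).getLastD [] := (getLastD_of_getLast? hg).symm
            have hx : ρ.stk (T0 + 1) =
                (ρ.stk e).dropLast ++ [(ρ.stk e).getLastD [] ++
                  [Sum.inr (a, (ρ.stk e).length - 1)]] := by
              rw [hu, hwl_eq]
            exact ⟨pushKey _ hx, a, Or.inr rfl⟩
      obtain ⟨hT01s', hpush⟩ := hmain
      have hprop' : ∀ i, T0 + 1 ≤ i → i ≤ ρ.len →
          ¬ ProperSubstack (ρ.stk i) (ρ.stk (T0 + 1)) := by
        rintro i h1 h2 ⟨hsub, hne2⟩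
        rw [hT01s'] at hsub hne2
        obtain ⟨mm, y, nn, h2', h1'⟩ := substack_elim hsub
        cases mm with
        | zero =>
            obtain rfl : s' = y := Option.some.inj h2'
            cases nn with
            | zero => exact hne2 (Option.some.inj h1').symm
            | succ nn' =>
                rw [iter_succ, hps', Option.bind_some] at h1'
                cases nn' with
                | zero =>
                    exact hT0max i (by omega) h2 (Option.some.inj h1').symm
                | succ nn'' =>
                    exact hsubC i (by omega) h2 (substack_of_pop1_iter h1')
                      (ne_of_iter_pop1 (by omega) h1')
        | succ mm' =>
            rw [iter_succ] at h2'
            obtain ⟨y1, hy1, hy2⟩ := Option.bind_eq_some_iff.mp h2'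
            obtain ⟨hgt', hy1e⟩ := pop2_eq_some hy1
            have hp2e : pop2 (ρ.stk e) = some y1 := by
              rw [hy1e, ← hD]
              exact pop2_def (by omega)
            have hsub2 : Substack (ρ.stk i) (ρ.stk e) :=
              substack_of_pop2 (substack_mk hy2 h1') hp2e
            refine hsubC i (by omega) h2 hsub2 ?_
            intro hie
            have hl1 := substack_length (substack_mk hy2 h1')
            have hl2 : y1.length = s'.length - 1 := by rw [hy1e, List.length_dropLast]
            rw [hie] at hl1
            omega
      obtain ⟨n, idx, hi0, hiN, hmono, hloops, hpushes⟩ :=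
        ih (T0 + 1) (by omega) (by rw [hT01s']; exact hks') hprop'
      have hHL : HighLoopSeg ρ e T0 := by
        apply mk_high_loop ρ hT0ge (by omega) hT0eq
        · intro i m h1 h2 hm hit
          exact hsubC i h1 (by omega) (substack_of_pop1_iter hit) (ne_of_iter_pop1 hm hit)
        · intro i t h1 h2 hp2 hsub
          obtain ⟨hgt, ht⟩ := pop2_eq_some hp2
          refine hsubC i h1 (by omega) (substack_of_pop2 hsub hp2) ?_
          intro hie
          have hl1 := substack_length hsub
          rw [hie, ht, List.length_dropLast] at hl1
          omega
      refine ⟨n + 1, fun j => match j with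
        | 0 => e
        | 1 => T0
        | (j + 2) => idx j, rfl, ?_, ?_, ?_, ?_⟩
      · show idx (2 * n + 1) = ρ.len
        exact hiN
      · intro i hi
        rcases i with _ | (_ | i)
        · exact hT0ge
        · show T0 ≤ idx 0
          rw [hi0]
          omega
        · show idx i ≤ idx (i + 1)
          exact hmono i (by omega)
      · intro i hi
        rcases i with _ | i
        · exact hHL
        · show HighLoopSeg ρ (idx (2 * i)) (idx (2 * i + 1))
          exact hloops i (by omega)
      · intro i hi
        rcases i with _ | i
        · refine ⟨?_, hpush⟩
          show idx 0 = T0 + 1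
          rw [hi0]
        · obtain ⟨p1, p2⟩ := hpushes i (by omega)
          exact ⟨p1, p2⟩

/-! #### Final helpers -/

lemma lvlS_one {s : Stack2 A} (h : lvlS s = some 1) : ∃ τ : A, top1 s = some (Sum.inl τ) := by
  unfold lvlS at h
  rcases ht : top1 s with _ | (τ | ⟨τ, κ⟩) <;> rw [ht] at h
  · simp at h
  · exact ⟨τ, rfl⟩
  · simp [lvlOf] at h

lemma collapse_of_lvl1 {s : Stack2 A} (h : lvlS s = some 1) : collapse s = pop1 s := by
  obtain ⟨τ, ht⟩ := lvlS_one h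
  unfold collapse
  rw [ht]

lemma getLastD_mem {s : Stack2 A} (h : s ≠ []) : s.getLastD [] ∈ s := by
  rw [stack_decomp h, List.getLastD_concat]
  simp

lemma idx_mono {idx : ℕ → ℕ} {N : ℕ} (hmono : ∀ i, i < N → idx i ≤ idx (i + 1)) :
    ∀ a b, a ≤ b → b ≤ N → idx a ≤ idx b := by
  intro a b hab hbN
  induction b with
  | zero =>
      obtain rfl : a = 0 := by omega
      exact le_refl _
  | succ b ih =>
      rcases eq_or_lt_of_le hab with h | h
      · rw [h]
      · exact le_trans (ih (by omega) (by omega)) (hmono b (by omega))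

lemma cover_down {idx : ℕ → ℕ} {n : ℕ}
    (hstep : ∀ i, i < n → idx (2 * i + 2) = idx (2 * i + 1) + 1) :
    ∀ m, m ≤ n → ∀ i, idx 0 ≤ i → i < idx (2 * m) →
      ∃ j, j < m ∧ idx (2 * j) ≤ i ∧ i ≤ idx (2 * j + 1) := by
  intro m
  induction m with
  | zero =>
      intro _ i h1 h2
      rw [show 2 * 0 = 0 by ring] at h2
      omega
  | succ m ih =>
      intro hm i h1 h2
      by_cases hge : idx (2 * m) ≤ i
      · refine ⟨m, by omega, hge, ?_⟩
        have := hstep m (by omega)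
        rw [show 2 * (m + 1) = 2 * m + 2 by ring] at h2
        omega
      · push_neg at hge
        obtain ⟨j, h3, h4, h5⟩ := ih (by omega) i h1 hge
        exact ⟨j, by omega, h4, h5⟩

lemma cover_up {idx : ℕ → ℕ} {n : ℕ}
    (hstep : ∀ i, i < n → idx (2 * i + 2) = idx (2 * i + 1) + 1) :
    ∀ m, m ≤ n → ∀ i, idx 0 ≤ i → i ≤ idx (2 * m + 1) →
      ∃ j, j ≤ m ∧ idx (2 * j) ≤ i ∧ i ≤ idx (2 * j + 1) := by
  intro m
  induction m with
  | zero =>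
      intro _ i h1 h2
      exact ⟨0, le_refl _, h1, h2⟩
  | succ m ih =>
      intro hm i h1 h2
      by_cases hge : idx (2 * (m + 1)) ≤ i
      · exact ⟨m + 1, le_refl _, hge, h2⟩
      · push_neg at hge
        have := hstep m (by omega)
        rw [show 2 * (m + 1) = 2 * m + 2 by ring] at hge
        obtain ⟨j, h3, h4, h5⟩ := ih (by omega) i h1 (by omega)
        exact ⟨j, by omega, h4, h5⟩

end Statement13Aux

/-- Characterisation of the runs witnessing `(c₁,c₂) ∈ R_↓` and
`(c₁,c₂) ∈ R_↑` by decompositions into high loops and single `Pop₁`/level-1-collapse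
(resp. push) transitions. -/
theorem down_up_decomposition
    {Q A Γ : Type} [DecidableEq A] (S : CPS Q A Γ)
    (c₁ c₂ : Q × Stack2 A) (hs₁ : IsStack S.bot c₁.2) (hs₂ : IsStack S.bot c₂.2)
    (ρ : Run S) :
    ((ρ.cfg 0 = c₁ ∧ ρ.cfg ρ.len = c₂ ∧ (∃ k, iter pop1 k c₁.2 = some c₂.2) ∧
        ∀ i, i < ρ.len → ¬ Substack (ρ.stk i) c₂.2) ↔
      (ρ.cfg 0 = c₁ ∧ ρ.cfg ρ.len = c₂ ∧ DownDecomp ρ)) ∧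
    ((ρ.cfg 0 = c₁ ∧ ρ.cfg ρ.len = c₂ ∧ (∃ k, iter pop1 k c₂.2 = some c₁.2) ∧
        ∀ i, i ≤ ρ.len → ¬ ProperSubstack (ρ.stk i) c₁.2) ↔
      (ρ.cfg 0 = c₁ ∧ ρ.cfg ρ.len = c₂ ∧ UpDecomp ρ)) := by
  constructor
  · constructor
    · rintro ⟨h0, hlen, ⟨k, hk⟩, Hg⟩
      refine ⟨h0, hlen, ?_⟩
      have hs0 : ρ.stk 0 = c₁.2 := by show (ρ.cfg 0).2 = c₁.2; rw [h0]
      have hsN : ρ.stk ρ.len = c₂.2 := by show (ρ.cfg ρ.len).2 = c₂.2; rw [hlen]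
      have Hg' : ∀ i, i < ρ.len → ¬ Substack (ρ.stk i) (ρ.stk ρ.len) := by
        intro i hi
        rw [hsN]
        exact Hg i hi
      obtain ⟨n, idx, hi0, hiN, hmono, hprops⟩ :=
        down_seg ρ Hg' k 0 (by omega) (by rw [hs0, hsN]; exact hk)
      exact ⟨n, idx, hi0, hiN, hmono, hprops⟩
    · rintro ⟨h0, hlen, n, idx, hi0, hiN, hmono, hprops⟩
      have hs0 : ρ.stk 0 = c₁.2 := by show (ρ.cfg 0).2 = c₁.2; rw [h0]
      have hsN : ρ.stk ρ.len = c₂.2 := by show (ρ.cfg ρ.len).2 = c₂.2; rw [hlen]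
      have hβ : ∀ b, b ≤ 2 * n → idx b ≤ ρ.len := by
        intro b hb
        have := idx_mono hmono b (2 * n) hb (le_refl _)
        omega
      have hchain : ∀ j, j ≤ n →
          iter pop1 j (ρ.stk (idx 0)) = some (ρ.stk (idx (2 * j))) := by
        intro j
        induction j with
        | zero => intro _; exact iter_zero _ _
        | succ j ihj =>
            intro hj
            obtain ⟨hl, heq2, hopj⟩ := hprops j (by omega)
            have hloopeq : ρ.stk (idx (2 * j + 1)) = ρ.stk (idx (2 * j)) := hl.1.2.2.1
            have hlt : idx (2 * j + 1) < ρ.len := by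
              have h1 := hβ (2 * j + 2) (by omega)
              omega
            have happ := stk_app ρ hlt
            rw [iter_succ', ihj (by omega), Option.bind_some,
              show 2 * (j + 1) = 2 * j + 2 by ring, heq2, ← hloopeq]
            rcases hopj with hpop | ⟨hcol, hlvl⟩
            · rw [hpop] at happ
              exact happ
            · rw [hcol] at happ
              rw [← collapse_of_lvl1 hlvl]
              exact happ
      refine ⟨h0, hlen, ⟨n, ?_⟩, ?_⟩
      · have h1 := hchain n (le_refl _)
        rw [hi0, hiN, hs0, hsN] at h1
        exact h1
      · intro i hi hsub
        rw [← hsN] at hsub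
        obtain ⟨j, hjn, hj1, hj2⟩ := cover_down (fun j hj => (hprops j hj).2.1) n (le_refl _)
          i (by rw [hi0]; omega) (by rw [hiN]; exact hi)
        obtain ⟨hl, heq2, hopj⟩ := hprops j hjn
        have hrel : iter pop1 (n - j) (ρ.stk (idx (2 * j))) = some (ρ.stk ρ.len) := by
          have h1 := hchain j (by omega)
          have h2 := hchain n (le_refl _)
          rw [show n = j + (n - j) by omega, iter_add, h1, Option.bind_some] at h2
          rw [show 2 * (j + (n - j)) = 2 * n by omega, hiN] at h2
          exact h2
        obtain ⟨mm, y, nn, h2', h1'⟩ := substack_elim hsub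
        have hβj : idx (2 * j + 1) ≤ ρ.len := hβ (2 * j + 1) (by omega)
        cases mm with
        | zero =>
            obtain rfl : ρ.stk ρ.len = y := Option.some.inj h2'
            have hcomb : iter pop1 ((n - j) + nn) (ρ.stk (idx (2 * j))) =
                some (ρ.stk i) := by
              rw [iter_add, hrel, Option.bind_some]
              exact h1'
            exact high_no_pop ρ hβj hl hj1 hj2 (by omega) hcomb
        | succ mm' =>
            rw [iter_succ] at h2'
            obtain ⟨y1, hy1, hy2⟩ := Option.bind_eq_some_iff.mp h2'
            obtain ⟨hgt, hy1e⟩ := pop2_eq_some hy1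
            obtain ⟨hdz, _, _⟩ := iter_pop1_spec hrel
            have hlenz := iter_pop1_length hrel
            have hp2 : pop2 (ρ.stk (idx (2 * j))) = some y1 := by
              rw [hy1e, hdz]
              exact pop2_def (by omega)
            exact hl.1.2.2.2.1 i hj1 hj2 y1 hp2 (substack_mk hy2 h1')
  · constructor
    · rintro ⟨h0, hlen, ⟨k, hk⟩, Hp⟩
      refine ⟨h0, hlen, ?_⟩
      have hs0 : ρ.stk 0 = c₁.2 := by show (ρ.cfg 0).2 = c₁.2; rw [h0]
      have hsN : ρ.stk ρ.len = c₂.2 := by show (ρ.cfg ρ.len).2 = c₂.2; rw [hlen]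
      obtain ⟨n, idx, hi0, hiN, hmono, hloops, hpushes⟩ :=
        up_seg ρ k 0 (by omega) (by rw [hs0, hsN]; exact hk)
          (by intro i _ h2; rw [hs0]; exact Hp i h2)
      exact ⟨n, idx, hi0, hiN, hmono, hloops, hpushes⟩
    · rintro ⟨h0, hlen, n, idx, hi0, hiN, hmono, hloops, hpushes⟩
      have hs0 : ρ.stk 0 = c₁.2 := by show (ρ.cfg 0).2 = c₁.2; rw [h0]
      have hsN : ρ.stk ρ.len = c₂.2 := by show (ρ.cfg ρ.len).2 = c₂.2; rw [hlen]
      have hIS0 : IsStack S.bot (ρ.stk 0) := by rw [hs0]; exact hs₁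
      have hβ : ∀ b, b ≤ 2 * n + 1 → idx b ≤ ρ.len := by
        intro b hb
        have := idx_mono hmono b (2 * n + 1) hb (le_refl _)
        omega
      have hchain : ∀ j, j ≤ n →
          iter pop1 j (ρ.stk (idx (2 * j))) = some (ρ.stk (idx 0)) := by
        intro j
        induction j with
        | zero => intro _; exact iter_zero _ _
        | succ j ihj =>
            intro hj
            obtain ⟨heq2, a, hopj⟩ := hpushes j (by omega)
            have hloopeq : ρ.stk (idx (2 * j + 1)) = ρ.stk (idx (2 * j)) :=
              (hloops j (by omega)).1.2.2.1
            have hlt : idx (2 * j + 1) < ρ.len := by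
              have h1 := hβ (2 * j + 2) (by omega)
              omega
            have happ := stk_app ρ hlt
            have hISj : IsStack S.bot (ρ.stk (idx (2 * j + 1))) :=
              run_isStack ρ hIS0 _ (by omega)
            have hfacts := isStack_facts hISj
            have hwne : (ρ.stk (idx (2 * j + 1))).getLastD [] ≠ [] :=
              hfacts.2 _ (getLastD_mem hfacts.1)
            have hwpos : 0 < ((ρ.stk (idx (2 * j + 1))).getLastD []).length :=
              List.length_pos_iff.mpr hwne
            have hpop : pop1 (ρ.stk (idx (2 * j + 1) + 1)) =
                some (ρ.stk (idx (2 * j + 1))) := by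
              rcases hopj with hpj | hpj
              · rw [hpj] at happ
                obtain ⟨wl, hg, hu⟩ := push1_eq_some happ
                have hwl : wl = (ρ.stk (idx (2 * j + 1))).getLastD [] :=
                  (getLastD_of_getLast? hg).symm
                rw [hu, pop1_concat
                  (by rw [List.length_append, List.length_singleton, hwl]; omega),
                  List.dropLast_concat]
                congr 1
                exact (getLast?_decomp hg).symm
              · rw [hpj] at happ
                obtain ⟨wl, hg, hu⟩ := push2_eq_some happ
                have hwl : wl = (ρ.stk (idx (2 * j + 1))).getLastD [] :=
                  (getLastD_of_getLast? hg).symm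
                rw [hu, pop1_concat
                  (by rw [List.length_append, List.length_singleton, hwl]; omega),
                  List.dropLast_concat]
                congr 1
                exact (getLast?_decomp hg).symm
            rw [show 2 * (j + 1) = 2 * j + 2 by ring, heq2, iter_succ, hpop,
              Option.bind_some, hloopeq]
            exact ihj (by omega)
      refine ⟨h0, hlen, ⟨n, ?_⟩, ?_⟩
      · have h1 := hchain n (le_refl _)
        have h2 : ρ.stk (idx (2 * n + 1)) = ρ.stk (idx (2 * n)) :=
          (hloops n (le_refl _)).1.2.2.1
        rw [hi0, hs0] at h1
        rw [← hsN, ← hiN, h2]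
        exact h1
      · intro i hi hps
        obtain ⟨hsub, hne2⟩ := hps
        have hc1 : c₁.2 = ρ.stk (idx 0) := by rw [hi0, hs0]
        rw [hc1] at hsub hne2
        obtain ⟨j, hjn, hj1, hj2⟩ := cover_up (fun j hj => (hpushes j hj).1) n (le_refl _)
          i (by rw [hi0]; omega) (by rw [hiN]; exact hi)
        have hrel := hchain j (by omega)
        obtain ⟨mm, y, nn, h2', h1'⟩ := substack_elim hsub
        cases mm with
        | zero =>
            obtain rfl : ρ.stk (idx 0) = y := Option.some.inj h2'
            have hcomb : iter pop1 (j + nn) (ρ.stk (idx (2 * j))) = some (ρ.stk i) := by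
              rw [iter_add, hrel, Option.bind_some]
              exact h1'
            rcases Nat.eq_zero_or_pos (j + nn) with hz | hpos
            · have hj0 : j = 0 := by omega
              rw [show j + nn = 0 by omega, iter_zero, hj0] at hcomb
              exact hne2 (Option.some.inj hcomb).symm
            · exact high_no_pop ρ (hβ (2 * j + 1) (by omega)) (hloops j (by omega))
                hj1 hj2 hpos hcomb
        | succ mm' =>
            rw [iter_succ] at h2'
            obtain ⟨y1, hy1, hy2⟩ := Option.bind_eq_some_iff.mp h2'
            obtain ⟨hgt, hy1e⟩ := pop2_eq_some hy1
            obtain ⟨hdz, _, _⟩ := iter_pop1_spec hrel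
            have hlenz := iter_pop1_length hrel
            have hp2 : pop2 (ρ.stk (idx (2 * j))) = some y1 := by
              rw [hy1e, hdz]
              exact pop2_def (by omega)
            exact (hloops j (by omega)).1.2.2.2.1 i hj1 hj2 y1 hp2 (substack_mk hy2 h1')


end CPG
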